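/- arXiv:2012.04106 — 4 statements merged into one kernel-verified Lean document; each statement's English description precedes it below -/
import Mathlib

section
/- The algebra map ψ : H_{2^n} → (H_{2^n})* determined by ψ(g) = 1* − g* and ψ(x_i) = x_i* − (g x_i)* for all i ∈ {1, …, n−1} (where (H_{2^n})* carries the convolution product) is an isomorphism of Hopf algebras; concretely, ψ is bijective, ψ(hh') = ψ(h) * ψ(h') and ψ(1) = ε for all h, h' ∈ H_{2^n}, and for all h, c, c' ∈ H_{2^n} one has ψ(h)(cc') = Σ ψ(h₁)(c)·ψ(h₂)(c') and ψ(h)(1) = ε(h). (Lemma 4.2.1) -/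
open scoped TensorProduct

/-- The linear map `h ↦ Σ λ(h₁) h₂` (Sweedler notation). -/
noncomputable def lCont (k H : Type*) [CommSemiring k] [Semiring H] [Bialgebra k H]
    (lam : H →ₗ[k] k) : H →ₗ[k] H :=
  (TensorProduct.lid k H).toLinearMap ∘ₗ TensorProduct.map lam LinearMap.id ∘ₗ Coalgebra.comul

/-- The linear map `h ↦ Σ h₁ λ(h₂)` (Sweedler notation). -/
noncomputable def rCont (k H : Type*) [CommSemiring k] [Semiring H] [Bialgebra k H]
    (lam : H →ₗ[k] k) : H →ₗ[k] H :=
  (TensorProduct.rid k H).toLinearMap ∘ₗ TensorProduct.map LinearMap.id lam ∘ₗ Coalgebra.comul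

/-- A partial action of a bialgebra `H` on its base field `k`: a linear map `λ : H → k` with
`λ(1) = 1` and `λ(h)λ(y) = Σ λ(h₁)λ(h₂y)` for all `h, y ∈ H`; by linearity the right-hand side
is `λ((Σ λ(h₁) h₂) · y)`. -/
def IsPartialAction (k H : Type*) [CommSemiring k] [Semiring H] [Bialgebra k H]
    (lam : H →ₗ[k] k) : Prop :=
  lam 1 = 1 ∧ ∀ h y : H, lam h * lam y = lam (lCont k H lam h * y)

/-- A symmetric partial action additionally satisfies `λ(h)λ(y) = Σ λ(h₁y)λ(h₂)`, i.e.
`λ(h)λ(y) = λ((Σ h₁ λ(h₂)) · y)`. -/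
def IsSymmPartialAction (k H : Type*) [CommSemiring k] [Semiring H] [Bialgebra k H]
    (lam : H →ₗ[k] k) : Prop :=
  IsPartialAction k H lam ∧ ∀ h y : H, lam h * lam y = lam (rCont k H lam h * y)

/-- A realization of the Nichols Hopf algebra `H_{2^n}`: a Hopf algebra `H` over `k` (with
`char k ≠ 2`) generated by `g, x_1, …, x_{n−1}` with `g² = 1`, `x_i² = 0`, `x_i g = −g x_i`,
`x_i x_j = −x_j x_i`, such that the products `g^{j₀} x_1^{j₁} ⋯ x_{n−1}^{j_{n−1}}`
(`j_t ∈ {0,1}`) form a `k`-basis, `g` is group-like and each `x_i` is `(1,g)`-primitive. -/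
structure NicholsData (k : Type*) [Field k] (n : ℕ) (H : Type*)
    [Ring H] [HopfAlgebra k H] where
  g : H
  x : Fin (n - 1) → H
  g_sq : g ^ 2 = 1
  x_sq : ∀ i, x i ^ 2 = 0
  x_mul_g : ∀ i, x i * g = -(g * x i)
  x_mul_x : ∀ i j, x i * x j = -(x j * x i)
  basis : Module.Basis (Fin 2 × (Fin (n - 1) → Fin 2)) k H
  basis_eq : ∀ p : Fin 2 × (Fin (n - 1) → Fin 2),
    basis p = g ^ (p.1 : ℕ) *
      ((List.finRange (n - 1)).map (fun i => x i ^ ((p.2 i : ℕ)))).prod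
  comul_g : Coalgebra.comul (R := k) g = g ⊗ₜ[k] g
  comul_x : ∀ i, Coalgebra.comul (R := k) (x i) = x i ⊗ₜ[k] (1 : H) + g ⊗ₜ[k] x i
  counit_g : Coalgebra.counit (R := k) g = 1
  counit_x : ∀ i, Coalgebra.counit (R := k) (x i) = 0

/-- The convolution product on the dual `H* = H →ₗ[k] k` of a coalgebra:
`(f * f')(c) = Σ f(c₁) f'(c₂)`. -/
noncomputable def conv (k H : Type*) [CommSemiring k] [Semiring H] [Bialgebra k H]
    (f f' : H →ₗ[k] k) : H →ₗ[k] k :=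
  LinearMap.mul' k k ∘ₗ TensorProduct.map f f' ∘ₗ Coalgebra.comul

/-!
Write `⟨h, c⟩ := ψ h c`. On the monomial basis `g^b x^L`, left multiplication by `g` and by
`x_j` is explicit up to sign, which shows that `χ := ψ g = 1* − g*` is an algebra map `H → k`
and `φ_i := ψ x_i` a `(χ, ε)`-twisted derivation. Induction over the generators then gives
`⟨h, c c'⟩ = Σ ⟨h₁, c⟩⟨h₂, c'⟩` and `⟨h, 1⟩ = ε h`.

For injectivity, the operators `D_i h := Σ φ_i(h₁) h₂` satisfy `⟨D_i h, c⟩ = ⟨h, x_i c⟩`, so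
`ker ψ` is `D_i`-stable. As `⟨h, 1⟩ = ε h = (1* + g*) h` and `⟨h, g⟩ = χ h = (1* − g*) h`, the
functionals `1*` and `g*` vanish on `ker ψ` when `char k ≠ 2`. Since `D_i` strips `x_i` from a
monomial up to sign, `(g^b x^(M + e_i))* = ± (g^b x^M)* ∘ D_i` whenever `M_i = 0`, so by induction
on `M` every coordinate vanishes on `ker ψ`. Surjectivity follows by comparing dimensions.
-/

namespace Coalgebra.Repr

variable {k H : Type*} [CommSemiring k] [Semiring H] [Bialgebra k H]

theorem conv_apply {c : H} {ι : Type*} (R : Coalgebra.Repr k c ι) (f f' : H →ₗ[k] k) :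
    conv k H f f' c = ∑ i ∈ R.index, f (R.left i) * f' (R.right i) := by
  simp [conv, ← R.eq, map_sum]

theorem lCont_apply {c : H} {ι : Type*} (R : Coalgebra.Repr k c ι) (lam : H →ₗ[k] k) :
    lCont k H lam c = ∑ i ∈ R.index, lam (R.left i) • R.right i := by
  simp [lCont, ← R.eq, map_sum]

end Coalgebra.Repr

section Sweedler

open Coalgebra

variable {k H : Type*} [CommSemiring k] [Semiring H] [Bialgebra k H]

theorem conv_apply_eq_apply_lCont (lam f : H →ₗ[k] k) (c : H) :
    conv k H lam f c = f (lCont k H lam c) := by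
  simp [(ℛ k c).conv_apply, (ℛ k c).lCont_apply, map_sum]

theorem lCont_mul_of_map_mul {χ : H →ₗ[k] k} (hχ : ∀ c d, χ (c * d) = χ c * χ d) (c d : H) :
    lCont k H χ (c * d) = lCont k H χ c * lCont k H χ d := by
  rw [((ℛ k c).mul (ℛ k d)).lCont_apply, (ℛ k c).lCont_apply, (ℛ k d).lCont_apply,
    Finset.sum_mul_sum, Repr.mul_index, Finset.sum_product]
  simp only [Repr.mul_left, Repr.mul_right, hχ, smul_mul_smul_comm]

theorem lCont_mul_of_twisted_derivation {χ φ : H →ₗ[k] k}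
    (hφ : ∀ c d, φ (c * d) = φ c * counit d + χ c * φ d) (c d : H) :
    lCont k H φ (c * d) = lCont k H φ c * d + lCont k H χ c * lCont k H φ d := by
  nth_rw 2 [← sum_counit_smul (ℛ k d)]
  rw [((ℛ k c).mul (ℛ k d)).lCont_apply, (ℛ k c).lCont_apply, (ℛ k c).lCont_apply,
    (ℛ k d).lCont_apply, Finset.sum_mul_sum, Finset.sum_mul_sum,
    ← Finset.sum_add_distrib, Repr.mul_index, Finset.sum_product]
  simp only [Repr.mul_left, Repr.mul_right, hφ, add_smul, smul_mul_smul_comm,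
    ← Finset.sum_add_distrib]

theorem apply_mul_eq_conv_flip_mul {ψ : H →ₗ[k] H →ₗ[k] k}
    (hψmul : ∀ h h', ψ (h * h') = conv k H (ψ h) (ψ h')) {h h' : H}
    (hh : ∀ c c', ψ h (c * c') = conv k H (ψ.flip c) (ψ.flip c') h)
    (hh' : ∀ c c', ψ h' (c * c') = conv k H (ψ.flip c) (ψ.flip c') h') (c c' : H) :
    ψ (h * h') (c * c') = conv k H (ψ.flip c) (ψ.flip c') (h * h') := by
  simp only [hψmul, ((ℛ k c).mul (ℛ k c')).conv_apply, ((ℛ k h).mul (ℛ k h')).conv_apply,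
    Repr.mul_left, Repr.mul_right, Repr.mul_index, hh, hh', (ℛ k h).conv_apply,
    (ℛ k h').conv_apply, LinearMap.flip_apply, (ℛ k c).conv_apply, (ℛ k c').conv_apply,
    Finset.sum_product, Finset.sum_mul_sum]
  -- both sides are the same sum over `(c₁, c'₁, h₁, h'₁)`, summed in different orders
  conv_lhs => enter [2, i]; rw [Finset.sum_comm]; enter [2, a]; rw [Finset.sum_comm]
  rw [Finset.sum_comm]
  conv_lhs => enter [2, a]; rw [Finset.sum_comm]
  exact Finset.sum_congr rfl fun _ _ => Finset.sum_congr rfl fun _ _ =>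
    Finset.sum_congr rfl fun _ _ => Finset.sum_congr rfl fun _ _ => mul_mul_mul_comm _ _ _ _

end Sweedler

section Generators

variable {k A : Type*} [CommSemiring k] [Semiring A] [Algebra k A] {S : Set A}

theorem LinearMap.map_mul_of_adjoin_eq_top (hS : Algebra.adjoin k S = ⊤) {χ : A →ₗ[k] k}
    (h1 : χ 1 = 1) (hmul : ∀ s ∈ S, ∀ d, χ (s * d) = χ s * χ d) (c d : A) :
    χ (c * d) = χ c * χ d := by
  induction (hS.ge (Set.mem_univ c) : c ∈ Algebra.adjoin k S) using Algebra.adjoin_induction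
    generalizing d with
  | mem s hs => exact hmul s hs d
  | algebraMap r => simp [Algebra.algebraMap_eq_smul_one, h1]
  | add a b _ _ ha hb => rw [add_mul, map_add, map_add, ha, hb, add_mul]
  | mul a b _ _ ha hb => rw [mul_assoc, ha, hb, ha b, mul_assoc]

theorem LinearMap.map_mul_eq_twisted_of_adjoin_eq_top (hS : Algebra.adjoin k S = ⊤)
    {φ χ ε : A →ₗ[k] k} (hχ1 : χ 1 = 1) (hχ : ∀ c d, χ (c * d) = χ c * χ d)
    (hε : ∀ c d, ε (c * d) = ε c * ε d) (hφ1 : φ 1 = 0)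
    (hφ : ∀ s ∈ S, ∀ d, φ (s * d) = φ s * ε d + χ s * φ d) (c d : A) :
    φ (c * d) = φ c * ε d + χ c * φ d := by
  induction (hS.ge (Set.mem_univ c) : c ∈ Algebra.adjoin k S) using Algebra.adjoin_induction
    generalizing d with
  | mem s hs => exact hφ s hs d
  | algebraMap r => simp [Algebra.algebraMap_eq_smul_one, hχ1, hφ1]
  | add a b _ _ ha hb => rw [add_mul, map_add, map_add, map_add, ha, hb]; ring
  | mul a b _ _ ha hb => rw [mul_assoc, ha, hb, ha b, hχ, hε]; ring

end Generators

section FunctionsToFin2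

variable {ι : Type*} [DecidableEq ι]

theorem Pi.single_one_inj {i j : ι} : (Pi.single i 1 : ι → Fin 2) = Pi.single j 1 ↔ i = j :=
  ⟨fun h => by simpa [Pi.single_apply] using congrFun h i, fun h => h ▸ rfl⟩

theorem Function.update_one_ne_zero (L : ι → Fin 2) (j : ι) : Function.update L j 1 ≠ 0 :=
  Function.ne_iff.2 ⟨j, by simp⟩

theorem Function.eq_zero_of_update_one_eq_single {L : ι → Fin 2} {i j : ι} (hL : L j = 0)
    (h : Function.update L j 1 = Pi.single i 1) : L = 0 := by
  have hji : j = i := by simpa [Pi.single_apply] using congrFun h j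
  subst hji
  funext t
  by_cases ht : t = j
  · rw [ht, hL]; rfl
  · simpa [ht] using congrFun h t

end FunctionsToFin2

theorem List.exists_finRange_eq_append_cons {m : ℕ} (i : Fin m) :
    ∃ l₁ l₂, List.finRange m = l₁ ++ i :: l₂ ∧ i ∉ l₁ ∧ i ∉ l₂ := by
  obtain ⟨l₁, l₂, hl⟩ := List.append_of_mem (List.mem_finRange i)
  have hnd := List.nodup_finRange m
  rw [hl, List.nodup_middle, List.nodup_cons, List.mem_append, not_or] at hnd
  exact ⟨l₁, l₂, hl, hnd.1⟩

namespace NicholsData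

variable {k H : Type*} [Field k] [Ring H] [HopfAlgebra k H] {n : ℕ} (N : NicholsData k n H)

def xProd (l : List (Fin (n - 1))) (L : Fin (n - 1) → Fin 2) : H :=
  (l.map fun t => N.x t ^ (L t : ℕ)).prod

@[simp] theorem xProd_nil (L) : N.xProd [] L = 1 := rfl

theorem xProd_cons (t l L) : N.xProd (t :: l) L = N.x t ^ (L t : ℕ) * N.xProd l L :=
  List.prod_cons

theorem xProd_append (l₁ l₂ L) : N.xProd (l₁ ++ l₂) L = N.xProd l₁ L * N.xProd l₂ L := by
  simp [xProd]

theorem xProd_congr {l L L'} (h : ∀ t ∈ l, L t = L' t) : N.xProd l L = N.xProd l L' := by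
  rw [xProd, xProd, List.map_congr_left fun t ht => by rw [h t ht]]

@[simp] theorem xProd_zero (l) : N.xProd l 0 = 1 := by
  simp [xProd]

theorem basis_apply (b L) : N.basis (b, L) = N.g ^ (b : ℕ) * N.xProd (List.finRange (n - 1)) L :=
  N.basis_eq _

theorem basis_update {i : Fin (n - 1)} {l₁ l₂} (hl : List.finRange (n - 1) = l₁ ++ i :: l₂)
    (h₁ : i ∉ l₁) (h₂ : i ∉ l₂) (b L e) : N.basis (b, Function.update L i e) =
      N.g ^ (b : ℕ) * N.xProd l₁ L * N.x i ^ (e : ℕ) * N.xProd l₂ L := by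
  have hne {l} (h : i ∉ l) : N.xProd l (Function.update L i e) = N.xProd l L :=
    N.xProd_congr fun t ht => Function.update_of_ne (ne_of_mem_of_not_mem ht h) _ _
  rw [basis_apply, hl, xProd_append, xProd_cons, hne h₁, hne h₂, Function.update_self]
  simp only [mul_assoc]

theorem basis_eq_of_split {i : Fin (n - 1)} {l₁ l₂} (hl : List.finRange (n - 1) = l₁ ++ i :: l₂)
    (h₁ : i ∉ l₁) (h₂ : i ∉ l₂) (b L) :
    N.basis (b, L) = N.g ^ (b : ℕ) * N.xProd l₁ L * N.x i ^ (L i : ℕ) * N.xProd l₂ L := by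
  rw [← N.basis_update hl h₁ h₂, Function.update_eq_self]

theorem basis_zero (b) : N.basis (b, 0) = N.g ^ (b : ℕ) := by
  simp [basis_apply]

theorem basis_single (b) (i : Fin (n - 1)) :
    N.basis (b, Pi.single i 1) = N.g ^ (b : ℕ) * N.x i := by
  obtain ⟨l₁, l₂, hl, h₁, h₂⟩ := List.exists_finRange_eq_append_cons i
  rw [Pi.single, N.basis_update hl h₁ h₂]
  simp

theorem one_eq_basis : (1 : H) = N.basis (0, 0) := by simp [basis_zero]

theorem g_eq_basis : N.g = N.basis (1, 0) := by simp [basis_zero]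

theorem x_eq_basis (i) : N.x i = N.basis (0, Pi.single i 1) := by simp [basis_single]

theorem g_mul_basis (b L) : N.g * N.basis (b, L) = N.basis (b + 1, L) := by
  fin_cases b
  · simp [basis_apply]
  · simp [basis_apply, ← mul_assoc, ← sq, N.g_sq]

theorem x_mul_g_pow (j) (m : ℕ) : N.x j * N.g ^ m = (-1 : k) ^ m • (N.g ^ m * N.x j) := by
  induction m with
  | zero => simp
  | succ m ih =>
    rw [pow_succ, ← mul_assoc, ih, smul_mul_assoc, mul_assoc, N.x_mul_g, pow_succ]
    simp [mul_assoc]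

theorem x_mul_x_pow (j t) (m : ℕ) : N.x j * N.x t ^ m = (-1 : k) ^ m • (N.x t ^ m * N.x j) := by
  induction m with
  | zero => simp
  | succ m ih =>
    rw [pow_succ, ← mul_assoc, ih, smul_mul_assoc, mul_assoc, N.x_mul_x, pow_succ]
    simp [mul_assoc]

theorem exists_x_mul_xProd (j l L) :
    ∃ s : ℕ, N.x j * N.xProd l L = (-1 : k) ^ s • (N.xProd l L * N.x j) := by
  induction l with
  | nil => exact ⟨0, by simp⟩
  | cons t l ih =>
    obtain ⟨s, hs⟩ := ih
    refine ⟨L t + s, ?_⟩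
    rw [xProd_cons, ← mul_assoc, x_mul_x_pow, smul_mul_assoc, mul_assoc, hs, pow_add]
    simp [mul_assoc, smul_smul]

theorem x_mul_basis_of_eq_one {j L} (hL : L j = 1) (b) : N.x j * N.basis (b, L) = 0 := by
  obtain ⟨l₁, l₂, hl, h₁, h₂⟩ := List.exists_finRange_eq_append_cons j
  obtain ⟨s, hs⟩ := N.exists_x_mul_xProd j l₁ L
  rw [N.basis_eq_of_split hl h₁ h₂, hL, Fin.val_one, pow_one]
  calc N.x j * (N.g ^ (b : ℕ) * N.xProd l₁ L * N.x j * N.xProd l₂ L)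
      = (N.x j * N.g ^ (b : ℕ)) * N.xProd l₁ L * N.x j * N.xProd l₂ L := by simp only [mul_assoc]
    _ = ((-1 : k) ^ (b : ℕ) * (-1) ^ s) •
          (N.g ^ (b : ℕ) * N.xProd l₁ L * (N.x j * N.x j) * N.xProd l₂ L) := by
      rw [x_mul_g_pow, smul_mul_assoc, mul_assoc (N.g ^ _), hs]
      simp only [smul_mul_assoc, mul_smul_comm, smul_smul, mul_assoc]
    _ = 0 := by rw [← sq, N.x_sq, mul_zero, zero_mul, smul_zero]

theorem x_mul_basis_of_eq_zero {j L} (hL : L j = 0) (b) :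
    ∃ s : ℕ, N.x j * N.basis (b, L) = (-1 : k) ^ s • N.basis (b, Function.update L j 1) := by
  obtain ⟨l₁, l₂, hl, h₁, h₂⟩ := List.exists_finRange_eq_append_cons j
  obtain ⟨s, hs⟩ := N.exists_x_mul_xProd j l₁ L
  refine ⟨b + s, ?_⟩
  rw [N.basis_eq_of_split hl h₁ h₂, N.basis_update hl h₁ h₂, hL]
  simp only [Fin.val_zero, Fin.val_one, pow_zero, pow_one, mul_one, ← mul_assoc, x_mul_g_pow,
    smul_mul_assoc]
  rw [mul_assoc (N.g ^ _), hs]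
  simp only [smul_mul_assoc, mul_smul_comm, smul_smul, pow_add, mul_assoc]

theorem x_mul_basis_zero (j b) :
    N.x j * N.basis (b, 0) = (-1 : k) ^ (b : ℕ) • N.basis (b, Pi.single j 1) := by
  rw [basis_zero, basis_single, x_mul_g_pow]

noncomputable def altCoord (M : Fin (n - 1) → Fin 2) : H →ₗ[k] k :=
  N.basis.coord (0, M) - N.basis.coord (1, M)

theorem altCoord_basis (M b L) :
    N.altCoord M (N.basis (b, L)) = if L = M then (-1) ^ (b : ℕ) else 0 := by
  fin_cases b <;> by_cases h : L = M <;> simp [altCoord, h]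

theorem altCoord_g_mul (M c) : N.altCoord M (N.g * c) = -N.altCoord M c := by
  have : N.altCoord M ∘ₗ LinearMap.mulLeft k N.g = -N.altCoord M := by
    refine N.basis.ext fun ⟨b, L⟩ => ?_
    simp only [LinearMap.comp_apply, LinearMap.mulLeft_apply, g_mul_basis, altCoord_basis,
      LinearMap.neg_apply]
    fin_cases b <;> split_ifs <;> simp
  exact LinearMap.congr_fun this c

theorem counit_basis (b L) :
    Coalgebra.counit (R := k) (N.basis (b, L)) = if L = 0 then 1 else 0 := by
  have hg : Coalgebra.counit (R := k) (N.g ^ (b : ℕ)) = 1 := by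
    rw [← Bialgebra.counitAlgHom_apply, map_pow, Bialgebra.counitAlgHom_apply, N.counit_g, one_pow]
  split_ifs with hL
  · rw [hL, basis_zero, hg]
  · obtain ⟨i, hi⟩ : ∃ i, L i = 1 := by
      obtain ⟨i, hi⟩ := Function.ne_iff.1 hL
      exact ⟨i, Fin.eq_one_of_ne_zero _ hi⟩
    obtain ⟨l₁, l₂, hl, h₁, h₂⟩ := List.exists_finRange_eq_append_cons i
    rw [N.basis_eq_of_split hl h₁ h₂, hi]
    simp [Bialgebra.counit_mul, N.counit_x]

theorem adjoin_eq_top : Algebra.adjoin k (insert N.g (Set.range N.x)) = ⊤ := by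
  refine eq_top_iff.2 fun h _ => ?_
  rw [← N.basis.sum_repr h]
  refine sum_mem fun ⟨b, L⟩ _ => Subalgebra.smul_mem _ ?_ _
  rw [basis_apply]
  refine mul_mem (pow_mem (Algebra.subset_adjoin (Set.mem_insert _ _)) _)
    (Subalgebra.list_prod_mem _ fun y hy => ?_)
  obtain ⟨t, -, rfl⟩ := List.mem_map.1 hy
  exact pow_mem (Algebra.subset_adjoin (Set.mem_insert_of_mem _ (Set.mem_range_self t))) _

@[elab_as_elim]
theorem induction {p : H → Prop} (algebraMap : ∀ r : k, p (algebraMap k H r)) (g : p N.g)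
    (x : ∀ i, p (N.x i)) (add : ∀ a b, p a → p b → p (a + b))
    (mul : ∀ a b, p a → p b → p (a * b)) (h : H) : p h := by
  induction (N.adjoin_eq_top.ge (Set.mem_univ h) :) using Algebra.adjoin_induction with
  | mem y hy => obtain rfl | ⟨i, rfl⟩ := hy <;> simp only [g, x]
  | algebraMap r => exact algebraMap r
  | add a b _ _ ha hb => exact add a b ha hb
  | mul a b _ _ ha hb => exact mul a b ha hb

noncomputable def chi : H →ₗ[k] k := N.altCoord 0

noncomputable def phi (i : Fin (n - 1)) : H →ₗ[k] k := N.altCoord (Pi.single i 1)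

@[simp] theorem chi_one : N.chi 1 = 1 := by simp [chi, N.one_eq_basis, altCoord_basis]

@[simp] theorem chi_g : N.chi N.g = -1 := by simp [chi, g_eq_basis, altCoord_basis]

@[simp] theorem chi_x (i) : N.chi (N.x i) = 0 := by
  simp [chi, x_eq_basis, altCoord_basis]

@[simp] theorem phi_one (i) : N.phi i 1 = 0 := by
  simp [phi, N.one_eq_basis, altCoord_basis, (Pi.single_ne_zero_iff.2 one_ne_zero).symm]

@[simp] theorem phi_g (i) : N.phi i N.g = 0 := by
  simp [phi, g_eq_basis, altCoord_basis, (Pi.single_ne_zero_iff.2 one_ne_zero).symm]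

theorem phi_x (i j) : N.phi i (N.x j) = if i = j then 1 else 0 := by
  simp [phi, x_eq_basis, altCoord_basis, Pi.single_one_inj, eq_comm]

theorem chi_x_mul (j c) : N.chi (N.x j * c) = 0 := by
  have : N.chi ∘ₗ LinearMap.mulLeft k (N.x j) = 0 := by
    refine N.basis.ext fun ⟨b, L⟩ => ?_
    simp only [LinearMap.comp_apply, LinearMap.mulLeft_apply, LinearMap.zero_apply]
    obtain hL | hL : L j = 0 ∨ L j = 1 := by omega
    · obtain ⟨s, hs⟩ := N.x_mul_basis_of_eq_zero hL b
      simp [hs, chi, altCoord_basis, Function.update_one_ne_zero]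
    · rw [N.x_mul_basis_of_eq_one hL, map_zero]
  exact LinearMap.congr_fun this c

theorem phi_x_mul (i j c) :
    N.phi i (N.x j * c) = if i = j then Coalgebra.counit (R := k) c else 0 := by
  have : N.phi i ∘ₗ LinearMap.mulLeft k (N.x j) = if i = j then Coalgebra.counit else 0 := by
    refine N.basis.ext fun ⟨b, L⟩ => ?_
    rw [LinearMap.comp_apply, LinearMap.mulLeft_apply]
    obtain hL | hL : L j = 0 ∨ L j = 1 := by omega
    · by_cases hL0 : L = 0
      · subst hL0
        rw [x_mul_basis_zero]
        split_ifs with hij <;>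
          simp [phi, altCoord_basis, Pi.single_one_inj, counit_basis, ← mul_pow, Ne.symm, hij]
      · obtain ⟨s, hs⟩ := N.x_mul_basis_of_eq_zero hL b
        have hne : Function.update L j 1 ≠ Pi.single i 1 :=
          fun h => hL0 (Function.eq_zero_of_update_one_eq_single hL h)
        split_ifs <;> simp [hs, phi, altCoord_basis, counit_basis, hL0, hne]
    · have hL0 : L ≠ 0 := Function.ne_iff.2 ⟨j, by simp [hL]⟩
      split_ifs <;> simp [x_mul_basis_of_eq_one N hL, counit_basis, hL0]
  have hc := LinearMap.congr_fun this c
  split_ifs at hc ⊢ <;> exact hc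

theorem chi_g_mul (c) : N.chi (N.g * c) = -N.chi c := N.altCoord_g_mul 0 c

theorem phi_g_mul (i c) : N.phi i (N.g * c) = -N.phi i c := N.altCoord_g_mul _ c

theorem chi_mul (c d : H) : N.chi (c * d) = N.chi c * N.chi d := by
  refine LinearMap.map_mul_of_adjoin_eq_top N.adjoin_eq_top N.chi_one ?_ c d
  rintro _ (rfl | ⟨j, rfl⟩) d
  · simp [chi_g_mul]
  · simp [chi_x_mul]

theorem phi_mul (i) (c d : H) :
    N.phi i (c * d) = N.phi i c * Coalgebra.counit d + N.chi c * N.phi i d := by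
  refine LinearMap.map_mul_eq_twisted_of_adjoin_eq_top N.adjoin_eq_top N.chi_one N.chi_mul
    (fun _ _ => Bialgebra.counit_mul _ _) (N.phi_one i) ?_ c d
  rintro _ (rfl | ⟨j, rfl⟩) d
  · simp [phi_g_mul]
  · simp [phi_x_mul, phi_x]

noncomputable def sigma : H →ₗ[k] H := lCont k H N.chi

noncomputable def D (i : Fin (n - 1)) : H →ₗ[k] H := lCont k H (N.phi i)

theorem sigma_mul (c d : H) : N.sigma (c * d) = N.sigma c * N.sigma d :=
  lCont_mul_of_map_mul N.chi_mul c d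

theorem D_mul (i) (c d : H) : N.D i (c * d) = N.D i c * d + N.sigma c * N.D i d :=
  lCont_mul_of_twisted_derivation (N.phi_mul i) c d

@[simp] theorem sigma_one : N.sigma 1 = 1 := by simp [sigma, lCont, Algebra.TensorProduct.one_def]

@[simp] theorem sigma_g : N.sigma N.g = -N.g := by simp [sigma, lCont, N.comul_g]

@[simp] theorem sigma_x (j) : N.sigma (N.x j) = -N.x j := by simp [sigma, lCont, N.comul_x]

@[simp] theorem D_one (i) : N.D i 1 = 0 := by simp [D, lCont, Algebra.TensorProduct.one_def]

@[simp] theorem D_g (i) : N.D i N.g = 0 := by simp [D, lCont, N.comul_g]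

theorem D_x (i j) : N.D i (N.x j) = if i = j then 1 else 0 := by
  simp [D, lCont, N.comul_x, phi_x]

theorem sigma_pow_of_eq_neg {y : H} (hy : N.sigma y = -y) (m : ℕ) :
    N.sigma (y ^ m) = (-1 : k) ^ m • y ^ m := by
  induction m with
  | zero => simp
  | succ m ih => rw [pow_succ, sigma_mul, ih, hy, pow_succ]; simp [mul_comm]

theorem D_pow_of_eq_zero {i} {y : H} (hy : N.D i y = 0) (m : ℕ) : N.D i (y ^ m) = 0 := by
  induction m with
  | zero => simp
  | succ m ih => rw [pow_succ, D_mul, ih, hy]; simp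

theorem exists_sigma_xProd (l L) : ∃ s : ℕ, N.sigma (N.xProd l L) = (-1 : k) ^ s • N.xProd l L := by
  induction l with
  | nil => exact ⟨0, by simp⟩
  | cons t l ih =>
    obtain ⟨s, hs⟩ := ih
    refine ⟨L t + s, ?_⟩
    rw [xProd_cons, sigma_mul, hs, N.sigma_pow_of_eq_neg (N.sigma_x t), smul_mul_smul_comm,
      pow_add]

theorem D_xProd_of_not_mem {i l} (hi : i ∉ l) (L) : N.D i (N.xProd l L) = 0 := by
  induction l with
  | nil => simp
  | cons t l ih =>
    rw [List.mem_cons, not_or] at hi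
    rw [xProd_cons, D_mul, ih hi.2, N.D_pow_of_eq_zero (by simp [D_x, hi.1])]
    simp

theorem D_x_pow_self (i) (e : Fin 2) : N.D i (N.x i ^ (e : ℕ)) = ((e : ℕ) : k) • 1 := by
  fin_cases e <;> simp [D_x]

-- The factor `(L i : k)` is `0` or `1`: `D i` kills the monomials without `x i`.
theorem exists_D_basis (i b L) : ∃ s : ℕ,
    N.D i (N.basis (b, L)) = ((-1 : k) ^ s * (L i : ℕ)) • N.basis (b, Function.update L i 0) := by
  obtain ⟨l₁, l₂, hl, h₁, h₂⟩ := List.exists_finRange_eq_append_cons i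
  obtain ⟨s, hs⟩ := N.exists_sigma_xProd l₁ L
  refine ⟨b + s, ?_⟩
  rw [N.basis_eq_of_split hl h₁ h₂, N.basis_update hl h₁ h₂, mul_assoc, D_mul, D_mul,
    D_mul, sigma_mul, N.D_pow_of_eq_zero (N.D_g i), N.D_xProd_of_not_mem h₁,
    N.D_xProd_of_not_mem h₂, N.sigma_pow_of_eq_neg N.sigma_g, hs, D_x_pow_self]
  simp only [zero_mul, mul_zero, add_zero, zero_add, smul_mul_assoc, mul_smul_comm, one_mul,
    Fin.val_zero, pow_zero, mul_one, smul_smul, pow_add, mul_assoc]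
  congr 1
  ring

theorem exists_coord_update_eq (i b) {M : Fin (n - 1) → Fin 2} (hM : M i = 0) : ∃ s : ℕ,
    N.basis.coord (b, Function.update M i 1) = (-1 : k) ^ s • (N.basis.coord (b, M) ∘ₗ N.D i) := by
  obtain ⟨s, hs⟩ := N.exists_D_basis i b (Function.update M i 1)
  rw [Function.update_idem, Function.update_self, ← hM, Function.update_eq_self] at hs
  refine ⟨s, N.basis.ext fun ⟨b', L⟩ => ?_⟩
  simp only [LinearMap.smul_apply, LinearMap.comp_apply, Module.Basis.coord_apply,
    Module.Basis.repr_self_apply]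
  split_ifs with hp
  · obtain ⟨rfl, rfl⟩ := Prod.mk.inj hp
    simp [hs, ← mul_pow]
  · obtain ⟨s', hs'⟩ := N.exists_D_basis i b' L
    obtain hL | hL : L i = 0 ∨ L i = 1 := by omega
    · simp [hs', hL]
    · have hne : (b', Function.update L i 0) ≠ (b, M) := by
        rintro ⟨⟩
        apply hp
        rw [Function.update_idem, ← hL, Function.update_eq_self]
      simp [hs', hL, hne]

theorem counit_eq_coord_add_coord :
    (Coalgebra.counit : H →ₗ[k] k) = N.basis.coord (0, 0) + N.basis.coord (1, 0) := by
  refine N.basis.ext fun ⟨b, L⟩ => ?_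
  fin_cases b <;> by_cases hL : L = 0 <;> simp [counit_basis, hL]

theorem conv_apply_g (f f' : H →ₗ[k] k) : conv k H f f' N.g = f N.g * f' N.g := by
  simp [conv, N.comul_g]

theorem conv_apply_x (f f' : H →ₗ[k] k) (i) :
    conv k H f f' (N.x i) = f (N.x i) * f' 1 + f N.g * f' (N.x i) := by
  simp [conv, N.comul_x]

structure IsDualMap (ψ : H →ₗ[k] H →ₗ[k] k) : Prop where
  map_one : ψ 1 = Coalgebra.counit
  map_mul : ∀ h h', ψ (h * h') = conv k H (ψ h) (ψ h')
  map_g : ψ N.g = N.chi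
  map_x : ∀ i, ψ (N.x i) = N.phi i

namespace IsDualMap

variable {N} {ψ : H →ₗ[k] H →ₗ[k] k}

theorem apply_one (hψ : N.IsDualMap ψ) (h : H) : ψ h 1 = Coalgebra.counit h := by
  induction h using NicholsData.induction N with
  | algebraMap r => simp [Algebra.algebraMap_eq_smul_one, hψ.map_one]
  | g => simp [hψ.map_g, N.counit_g]
  | x i => simp [hψ.map_x, N.counit_x]
  | add a b ha hb => simp [ha, hb]
  | mul a b ha hb => simp [hψ.map_mul, conv, Algebra.TensorProduct.one_def, ha, hb]

theorem apply_g (hψ : N.IsDualMap ψ) (h : H) : ψ h N.g = N.chi h := by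
  induction h using NicholsData.induction N with
  | algebraMap r => simp [Algebra.algebraMap_eq_smul_one, hψ.map_one, N.counit_g]
  | g => rw [hψ.map_g]
  | x i => simp [hψ.map_x]
  | add a b ha hb => simp [ha, hb]
  | mul a b ha hb => rw [hψ.map_mul, conv_apply_g, ha, hb, chi_mul]

theorem apply_x (hψ : N.IsDualMap ψ) (i) (h : H) : ψ h (N.x i) = N.phi i h := by
  induction h using NicholsData.induction N with
  | algebraMap r => simp [Algebra.algebraMap_eq_smul_one, hψ.map_one, N.counit_x]
  | g => simp [hψ.map_g]
  | x j => simp [hψ.map_x, phi_x, eq_comm]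
  | add a b ha hb => simp [ha, hb]
  | mul a b ha hb => rw [hψ.map_mul, conv_apply_x, ha, hb, hψ.apply_one, hψ.apply_g, phi_mul]

theorem apply_mul (hψ : N.IsDualMap ψ) (h c c' : H) :
    ψ h (c * c') = conv k H (ψ.flip c) (ψ.flip c') h := by
  induction h using NicholsData.induction N generalizing c c' with
  | algebraMap r =>
    simp [Algebra.algebraMap_eq_smul_one, hψ.map_one, conv, Algebra.TensorProduct.one_def,
      Bialgebra.counit_mul]
  | g => simp [conv_apply_g, hψ.map_g, chi_mul]
  | x i => simp [conv_apply_x, hψ.map_x, hψ.map_g, hψ.map_one, phi_mul]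
  | add a b ha hb => simp [ha, hb]
  | mul a b ha hb => exact apply_mul_eq_conv_flip_mul hψ.map_mul ha hb c c'

theorem apply_D (hψ : N.IsDualMap ψ) (i) (h c : H) : ψ (N.D i h) c = ψ h (N.x i * c) := by
  have hx : ψ.flip (N.x i) = N.phi i := LinearMap.ext (hψ.apply_x i)
  rw [hψ.apply_mul, hx, conv_apply_eq_apply_lCont, D, LinearMap.flip_apply]

theorem coord_zero_eq_zero (hψ : N.IsDualMap ψ) (h2 : (2 : k) ≠ 0) {h : H} (hh : ψ h = 0) (b) :
    N.basis.coord (b, 0) h = 0 := by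
  have hε : N.basis.coord (0, 0) h + N.basis.coord (1, 0) h = 0 := by
    rw [← LinearMap.add_apply, ← counit_eq_coord_add_coord, ← hψ.apply_one, hh,
      LinearMap.zero_apply]
  have hχ : N.basis.coord (0, 0) h - N.basis.coord (1, 0) h = 0 := by
    rw [← LinearMap.sub_apply, ← altCoord, ← chi, ← hψ.apply_g, hh, LinearMap.zero_apply]
  fin_cases b
  · simpa [h2] using (by linear_combination hε + hχ : 2 * N.basis.coord (0, 0) h = 0)
  · simpa [h2] using (by linear_combination hε - hχ : 2 * N.basis.coord (1, 0) h = 0)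

theorem coord_eq_zero (hψ : N.IsDualMap ψ) (h2 : (2 : k) ≠ 0) {h : H} (hh : ψ h = 0) (p) :
    N.basis.coord p h = 0 := by
  obtain ⟨b, J⟩ := p
  suffices ∀ (T : Finset (Fin (n - 1))) (J : Fin (n - 1) → Fin 2), (∀ t, J t = 1 ↔ t ∈ T) →
      ∀ h, ψ h = 0 → N.basis.coord (b, J) h = 0 from
    this (Finset.univ.filter (J · = 1)) J (by simp) h hh
  intro T
  induction T using Finset.induction_on with
  | empty =>
    intro J hJ h hh
    obtain rfl : J = 0 := funext fun t => by
      have := hJ t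
      simp only [Finset.notMem_empty, iff_false] at this
      simp only [Pi.zero_apply]
      omega
    exact hψ.coord_zero_eq_zero h2 hh b
  | insert i T hi ih =>
    intro J hJ h hh
    have hJi : J i = 1 := (hJ i).2 (Finset.mem_insert_self i T)
    have hM : ∀ t, Function.update J i 0 t = 1 ↔ t ∈ T := by
      intro t
      by_cases hti : t = i
      · subst hti; simp [hi]
      · simp [hti, hJ t]
    obtain ⟨s, hs⟩ := N.exists_coord_update_eq i b (Function.update_self i 0 J)
    have hDh : ψ (N.D i h) = 0 := LinearMap.ext fun c => by rw [hψ.apply_D, hh]; rfl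
    rw [Function.update_idem, ← hJi, Function.update_eq_self] at hs
    rw [hs, LinearMap.smul_apply, LinearMap.comp_apply, ih _ hM _ hDh, smul_zero]

theorem injective (hψ : N.IsDualMap ψ) (h2 : (2 : k) ≠ 0) : Function.Injective ψ :=
  (injective_iff_map_eq_zero ψ).2 fun h hh =>
    N.basis.ext_elem fun p => by simpa using hψ.coord_eq_zero h2 hh p

end IsDualMap

end NicholsData

theorem lemma_4_2_1_general {k H : Type*} [Field k] [Ring H] [HopfAlgebra k H]
    {n : ℕ} (hchar : ringChar k ≠ 2)
    (N : NicholsData k n H)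
    (ψ : H →ₗ[k] (H →ₗ[k] k))
    (hψ1 : ψ 1 = Coalgebra.counit (R := k))
    (hψmul : ∀ h h' : H, ψ (h * h') = conv k H (ψ h) (ψ h'))
    (hψg : ψ N.g = N.basis.coord (0, 0) - N.basis.coord (1, 0))
    (hψx : ∀ i : Fin (n - 1), ψ (N.x i) =
      N.basis.coord (0, Pi.single i 1) - N.basis.coord (1, Pi.single i 1)) :
    Function.Bijective ψ ∧
    ψ 1 = Coalgebra.counit (R := k) ∧
    (∀ h h' : H, ψ (h * h') = conv k H (ψ h) (ψ h')) ∧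
    (∀ h c c' : H, ψ h (c * c') = conv k H (ψ.flip c) (ψ.flip c') h) ∧
    (∀ h : H, ψ h 1 = Coalgebra.counit (R := k) h) := by
  have hψ : N.IsDualMap ψ := ⟨hψ1, hψmul, hψg, hψx⟩
  have hinj := hψ.injective (Ring.two_ne_zero hchar)
  have : Module.Finite k H := Module.Finite.of_basis N.basis
  have hsurj := (LinearMap.injective_iff_surjective_of_finrank_eq_finrank
    Subspace.dual_finrank_eq.symm).1 hinj
  exact ⟨⟨hinj, hsurj⟩, hψ1, hψmul, hψ.apply_mul, hψ.apply_one⟩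

/-- Lemma 4.2.1: the algebra map `ψ : H_{2^n} → (H_{2^n})*` determined by `ψ(g) = 1* − g*`
and `ψ(x_i) = x_i* − (g x_i)*` (the dual `(H_{2^n})*` carrying the convolution product, and
`b*` denoting the dual basis functional `basis.coord`; `1 = g⁰`, `x_i` corresponding to the
exponent vector `Pi.single i 1`) is an isomorphism of Hopf algebras: `ψ` is bijective,
`ψ(h h') = ψ(h) * ψ(h')` and `ψ(1) = ε`, and for all `h, c, c'` one has
`ψ(h)(c c') = Σ ψ(h₁)(c)·ψ(h₂)(c')` and `ψ(h)(1) = ε(h)`. -/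
theorem lemma_4_2_1 {k H : Type*} [Field k] [Ring H] [HopfAlgebra k H]
    {n : ℕ} (hn : 2 ≤ n) (hchar : ringChar k ≠ 2)
    (N : NicholsData k n H)
    (ψ : H →ₗ[k] (H →ₗ[k] k))
    (hψ1 : ψ 1 = Coalgebra.counit (R := k))
    (hψmul : ∀ h h' : H, ψ (h * h') = conv k H (ψ h) (ψ h'))
    (hψg : ψ N.g = N.basis.coord (0, 0) - N.basis.coord (1, 0))
    (hψx : ∀ i : Fin (n - 1), ψ (N.x i) =
      N.basis.coord (0, Pi.single i 1) - N.basis.coord (1, Pi.single i 1)) :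
    Function.Bijective ψ ∧
    ψ 1 = Coalgebra.counit (R := k) ∧
    (∀ h h' : H, ψ (h * h') = conv k H (ψ h) (ψ h')) ∧
    (∀ h c c' : H, ψ h (c * c') = conv k H (ψ.flip c) (ψ.flip c') h) ∧
    (∀ h : H, ψ h 1 = Coalgebra.counit (R := k) h) :=
  lemma_4_2_1_general hchar N ψ hψ1 hψmul hψg hψx
end

section
/- An element z of the Nichols Hopf algebra H_{2^n} is a partial coaction of H_{2^n} on k if and only if z = 1 (the global coaction) or z = z_α = (1+g)/2 − Σ_{i=1}^{n−1} α_i·g x_i for some α = (α_1, …, α_{n−1}) ∈ k^{n−1}. Moreover, all these partial coactions are symmetric. (Theorem 4.2.2) -/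
open scoped TensorProduct

/-- An element `z` of a bialgebra `H` over `k` is a partial coaction of `H` on `k` if
`ε(z) = 1` and `z⊗z = (z⊗1)Δ(z)` in `H ⊗ H`. -/
def IsPartialCoaction (k H : Type*) [CommSemiring k] [Semiring H] [Bialgebra k H]
    (z : H) : Prop :=
  Coalgebra.counit (R := k) z = 1 ∧
    z ⊗ₜ[k] z = (z ⊗ₜ[k] (1 : H)) * Coalgebra.comul (R := k) z

/-- A partial coaction `z` is symmetric if moreover `z⊗z = Δ(z)(z⊗1)`. -/
def IsSymmPartialCoaction (k H : Type*) [CommSemiring k] [Semiring H] [Bialgebra k H]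
    (z : H) : Prop :=
  IsPartialCoaction k H z ∧
    z ⊗ₜ[k] z = Coalgebra.comul (R := k) z * (z ⊗ₜ[k] (1 : H))

/-!
Slicing `z ⊗ z = (z ⊗ 1) Δ z` by a functional `φ` in the second leg gives
`φ(z) z = z · (id ⊗ φ)(Δ z)`; take for `φ` coordinates in the basis `g^j x^s`. For the coordinates
at `1` and `g`, `(id ⊗ φ) ∘ Δ` is the projection `z ↦ z_j` onto the monomials of `g`-degree `j`, and
as `H` is graded by the `g`-degree this yields `a z₀ = z₀²` and `b z₁ = z₀ z₁`, where `a, b` are the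
coefficients of `1, g` in `z`. Applying `ε` gives `a + b = 1` and `b² = a b`. The monomials with
`s ≠ ∅` span a nilpotent ideal, so `a z₀ = z₀²` with `a ≠ 0` forces `z₀ = a`; if `b = 0` this
already gives `z = 1`. Otherwise `a = b = 1/2`, and for the coordinate at `g xᵢ` the slice
`(id ⊗ φ)(Δ z)` must be a scalar, while its coefficient at `x^(s ∖ i)` is `±` that of `g x^s` in
`z`: so no monomial `g x^s` with `|s| ≥ 2` occurs.

Conversely, `z = (1 + w)/2` with `w = g − 2 Σ αᵢ g xᵢ` satisfies `w² = 1`, hence `z w = w z = z`,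
and this is all that remains of both coaction identities once `Δ z` is expanded.
-/

lemma List.prod_map_ite_one {α M : Type*} [Monoid M] (p : α → Prop) [DecidablePred p]
    (f : α → M) (l : List α) :
    (l.map fun a => if p a then f a else 1).prod = ((l.filter p).map f).prod := by
  induction l with
  | nil => simp
  | cons a l ih => by_cases h : p a <;> simp [h, ih]

lemma List.Nodup.erase_filter_mem {α : Type*} [DecidableEq α] {L : List α} (hL : L.Nodup)
    (s : Finset α) (i : α) : (L.filter (· ∈ s)).erase i = L.filter (· ∈ s.erase i) := by
  rw [(hL.filter _).erase_eq_filter, List.filter_filter]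
  exact List.filter_congr fun a _ => by by_cases a = i <;> simp [*]

lemma Finset.sum_eq_empty_add_sum_singleton {α M : Type*} [Fintype α] [DecidableEq α]
    [AddCommMonoid M] (f : Finset α → M) (hf : ∀ s, 1 < s.card → f s = 0) :
    ∑ s, f s = f ∅ + ∑ a, f {a} := by
  have hsub : insert ∅ (Finset.univ.image singleton) ⊆ (Finset.univ : Finset (Finset α)) :=
    Finset.subset_univ _
  rw [← Finset.sum_subset hsub, Finset.sum_insert, Finset.sum_image]
  · exact fun a _ b _ h => Finset.singleton_injective h
  · simp
  · intro s _ hs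
    refine hf s (lt_of_not_ge fun h => hs ?_)
    rcases Nat.le_one_iff_eq_zero_or_eq_one.mp h with h | h
    · simp [Finset.card_eq_zero.mp h]
    · obtain ⟨a, rfl⟩ := Finset.card_eq_one.mp h
      simp

lemma Submodule.apply_mem_of_mem_span_image {R M M' ι : Type*} [Semiring R] [AddCommMonoid M]
    [Module R M] [AddCommMonoid M'] [Module R M'] (f : M →ₗ[R] M') {b : ι → M} {S : Set ι}
    {P : Submodule R M'} (h : ∀ i ∈ S, f (b i) ∈ P) {v : M} (hv : v ∈ Submodule.span R (b '' S)) :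
    f v ∈ P :=
  (Submodule.map_span_le f _ P).mpr (by rintro _ ⟨i, hi, rfl⟩; exact h i hi)
    (Submodule.mem_map_of_mem hv)

def finsetEquivFinTwoFun (α : Type*) [Fintype α] [DecidableEq α] : Finset α ≃ (α → Fin 2) where
  toFun s a := if a ∈ s then 1 else 0
  invFun S := Finset.univ.filter (S · = 1)
  left_inv s := by ext a; by_cases a ∈ s <;> simp [*]
  right_inv S := by funext a; rcases Fin.exists_fin_two.mp ⟨S a, rfl⟩ with h | h <;> simp [h]

section Slice

variable {k H : Type*} [CommSemiring k] [Semiring H] [Bialgebra k H]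

noncomputable abbrev sliceRight (φ : H →ₗ[k] k) : H ⊗[k] H →ₗ[k] H :=
  (TensorProduct.rid k H).toLinearMap ∘ₗ TensorProduct.map LinearMap.id φ

lemma sliceRight_tmul_mul (φ : H →ₗ[k] k) (a b : H) (t : H ⊗[k] H) :
    sliceRight φ ((a ⊗ₜ[k] b) * t) = a * sliceRight (φ ∘ₗ LinearMap.mulLeft k b) t := by
  induction t with
  | zero => simp
  | tmul c d => simp
  | add t₁ t₂ h₁ h₂ => simp only [mul_add, map_add, h₁, h₂]

lemma rCont_one (φ : H →ₗ[k] k) : rCont k H φ 1 = φ 1 • 1 := by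
  simp [rCont, Bialgebra.comul_one, Algebra.TensorProduct.one_def]

lemma rCont_mul_of_comul_eq_tmul (φ : H →ₗ[k] k) {u a b : H}
    (hu : Coalgebra.comul (R := k) u = a ⊗ₜ[k] b) (v : H) :
    rCont k H φ (u * v) = a * rCont k H (φ ∘ₗ LinearMap.mulLeft k b) v := by
  change sliceRight φ _ = a * sliceRight _ _
  rw [Bialgebra.comul_mul, hu, sliceRight_tmul_mul]

lemma rCont_mul_of_comul_eq_add (φ : H →ₗ[k] k) {u a b c d : H}
    (hu : Coalgebra.comul (R := k) u = a ⊗ₜ[k] b + c ⊗ₜ[k] d) (v : H) :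
    rCont k H φ (u * v) = a * rCont k H (φ ∘ₗ LinearMap.mulLeft k b) v +
      c * rCont k H (φ ∘ₗ LinearMap.mulLeft k d) v := by
  change sliceRight φ _ = a * sliceRight _ _ + c * sliceRight _ _
  rw [Bialgebra.comul_mul, hu, add_mul, map_add, sliceRight_tmul_mul, sliceRight_tmul_mul]

lemma rCont_zero (v : H) : rCont k H (0 : H →ₗ[k] k) v = 0 := by
  simp [rCont]

lemma counit_rCont (φ : H →ₗ[k] k) (h : H) :
    Coalgebra.counit (R := k) (rCont k H φ h) = φ h := by
  have key : Coalgebra.counit (R := k) ∘ₗ rCont k H φ =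
      TensorProduct.lid k k ∘ₗ TensorProduct.map LinearMap.id φ ∘ₗ
        (LinearMap.rTensor H Coalgebra.counit ∘ₗ Coalgebra.comul) := by
    simp only [rCont, ← LinearMap.comp_assoc]
    congr 1
    ext a b
    simp [mul_comm]
  simpa [Coalgebra.rTensor_counit_comp_comul] using LinearMap.congr_fun key h

lemma IsPartialCoaction.smul_eq_mul_rCont {z : H} (hz : IsPartialCoaction k H z)
    (φ : H →ₗ[k] k) : φ z • z = z * rCont k H φ z := by
  have h := congrArg (sliceRight φ) hz.2
  rwa [sliceRight_tmul_mul, LinearMap.mulLeft_one, LinearMap.comp_id] at h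

end Slice

lemma isSymmPartialCoaction_one {k H : Type*} [CommSemiring k] [Semiring H] [Bialgebra k H] :
    IsSymmPartialCoaction k H 1 := by
  refine ⟨⟨Bialgebra.counit_one, ?_⟩, ?_⟩ <;>
    simp [Bialgebra.comul_one, Algebra.TensorProduct.one_def]

lemma isSymmPartialCoaction_half_add {k H : Type*} [Field k] [Ring H] [Bialgebra k H]
    (h2 : (2 : k) ≠ 0) {g u : H} (hg : Coalgebra.comul (R := k) g = g ⊗ₜ[k] g)
    (hεg : Coalgebra.counit (R := k) g = 1) (hgg : g * g = 1)
    (hu : Coalgebra.comul (R := k) u = u ⊗ₜ[k] g + 1 ⊗ₜ[k] u)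
    (hεu : Coalgebra.counit (R := k) u = 0) (huu : u * u = 0) (hgu : g * u = -(u * g)) :
    IsSymmPartialCoaction k H ((2 : k)⁻¹ • (1 + g) + u) := by
  set z := (2 : k)⁻¹ • (1 + g) + u
  set v := (2 : k)⁻¹ • g + u
  have hzv : z = (2 : k)⁻¹ • 1 + v := by module
  have hΔ : Coalgebra.comul (R := k) z =
      (2 : k)⁻¹ • ((1 : H) ⊗ₜ[k] (1 : H)) + v ⊗ₜ[k] g + 1 ⊗ₜ[k] u := by
    simp only [z, v, map_add, map_smul, Bialgebra.comul_one, hg, hu, Algebra.TensorProduct.one_def,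
      TensorProduct.add_tmul, TensorProduct.smul_tmul', smul_add]
    abel
  have hvv : v * v = ((2 : k)⁻¹ * 2⁻¹) • 1 := by
    simp only [v, add_mul, mul_add, smul_mul_assoc, mul_smul_comm, hgg, huu, hgu, smul_neg]
    module
  have hz_mul_v : z * v = (2 : k)⁻¹ • z := by
    rw [hzv, add_mul, smul_mul_assoc, one_mul, hvv]
    module
  have hv_mul_z : v * z = (2 : k)⁻¹ • z := by
    rw [hzv, mul_add, mul_smul_comm, mul_one, hvv]
    module
  have hzz : z ⊗ₜ[k] z = (2 : k)⁻¹ • (z ⊗ₜ[k] (1 : H)) + (2 : k)⁻¹ • (z ⊗ₜ[k] g) + z ⊗ₜ[k] u := by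
    nth_rewrite 2 [show z = (2 : k)⁻¹ • 1 + (2 : k)⁻¹ • g + u by module]
    simp only [TensorProduct.tmul_add, TensorProduct.tmul_smul]
  refine ⟨⟨?_, ?_⟩, ?_⟩
  · simp only [z, map_add, map_smul, Bialgebra.counit_one, hεg, hεu, smul_eq_mul]
    field_simp
    norm_num
  · rw [hzz, hΔ]
    simp only [mul_add, mul_smul_comm, Algebra.TensorProduct.tmul_mul_tmul, mul_one, one_mul,
      hz_mul_v, TensorProduct.smul_tmul']
  · rw [hzz, hΔ]
    simp only [add_mul, smul_mul_assoc, Algebra.TensorProduct.tmul_mul_tmul, mul_one, one_mul,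
      hv_mul_z, TensorProduct.smul_tmul']

namespace NicholsData

variable {k H : Type*} [Field k] [Ring H] [HopfAlgebra k H] {n : ℕ} (N : NicholsData k n H)

noncomputable def prodX (l : List (Fin (n - 1))) : H := (l.map N.x).prod

noncomputable def mon (s : Finset (Fin (n - 1))) : H :=
  N.prodX ((List.finRange (n - 1)).filter (· ∈ s))

/-- The basis `g^j x^s` of `N.basis`, indexed by subsets `s` instead of exponent vectors. -/
noncomputable def bas : Module.Basis (Fin 2 × Finset (Fin (n - 1))) k H :=
  N.basis.reindex ((Equiv.refl (Fin 2)).prodCongr (finsetEquivFinTwoFun (Fin (n - 1))).symm)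

lemma bas_apply (j : Fin 2) (s : Finset (Fin (n - 1))) :
    N.bas (j, s) = N.g ^ (j : ℕ) * N.mon s := by
  rw [bas, Module.Basis.reindex_apply, N.basis_eq, mon, prodX, ← List.prod_map_ite_one]
  congr 3
  funext a
  by_cases ha : a ∈ s <;> simp [finsetEquivFinTwoFun, ha]

lemma g_mul_g : N.g * N.g = 1 := by rw [← sq, N.g_sq]

lemma x_mul_self (a : Fin (n - 1)) : N.x a * N.x a = 0 := by rw [← sq, N.x_sq]

lemma mon_empty : N.mon ∅ = 1 := by simp [mon, prodX]

lemma mon_singleton (i : Fin (n - 1)) : N.mon {i} = N.x i := by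
  simp [mon, prodX, List.filter_eq, List.count_eq_one_of_mem (List.nodup_finRange _)]

lemma bas_zero_empty : N.bas (0, ∅) = 1 := by simp [bas_apply, mon_empty]

lemma bas_zero_singleton (i : Fin (n - 1)) : N.bas (0, {i}) = N.x i := by
  simp [bas_apply, mon_singleton]

lemma bas_one_empty : N.bas (1, ∅) = N.g := by simp [bas_apply, mon_empty]

lemma bas_one_singleton (i : Fin (n - 1)) : N.bas (1, {i}) = N.g * N.x i := by
  simp [bas_apply, mon_singleton]

lemma g_mul_bas (j : Fin 2) (s : Finset (Fin (n - 1))) :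
    N.g * N.bas (j, s) = N.bas (j + 1, s) := by
  fin_cases j <;> simp [bas_apply, ← mul_assoc, g_mul_g]

lemma prodX_cons (a : Fin (n - 1)) (l : List (Fin (n - 1))) :
    N.prodX (a :: l) = N.x a * N.prodX l := by
  simp [prodX]

lemma x_mul_prodX_filter_eq_zero {L : List (Fin (n - 1))} {a : Fin (n - 1)} (ha : a ∈ L)
    {s : Finset (Fin (n - 1))} (has : a ∈ s) : N.x a * N.prodX (L.filter (· ∈ s)) = 0 := by
  induction L with
  | nil => simp at ha
  | cons b L ih =>
    by_cases hb : b = a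
    · subst hb
      rw [List.filter_cons_of_pos (by simpa using has), prodX_cons, ← mul_assoc, x_mul_self,
        zero_mul]
    · have ha' : a ∈ L := by simpa [Ne.symm hb] using ha
      by_cases hbs : b ∈ s
      · rw [List.filter_cons_of_pos (by simpa using hbs), prodX_cons, ← mul_assoc, N.x_mul_x,
          neg_mul, mul_assoc, ih ha', mul_zero, neg_zero]
      · rw [List.filter_cons_of_neg (by simpa using hbs)]
        exact ih ha'

lemma x_mul_prodX_filter_mem_span {L : List (Fin (n - 1))} (hL : L.Nodup) {a : Fin (n - 1)}
    (ha : a ∈ L) (s : Finset (Fin (n - 1))) :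
    N.x a * N.prodX (L.filter (· ∈ s)) ∈ k ∙ N.prodX (L.filter (· ∈ insert a s)) := by
  induction L with
  | nil => simp at ha
  | cons b L ih =>
    obtain ⟨hbL, hL⟩ := List.nodup_cons.mp hL
    by_cases hb : b = a
    · subst hb
      by_cases hbs : b ∈ s
      · rw [N.x_mul_prodX_filter_eq_zero List.mem_cons_self hbs]
        exact Submodule.zero_mem _
      have hfilter : (b :: L).filter (· ∈ insert b s) = b :: L.filter (· ∈ s) := by
        rw [List.filter_cons_of_pos (by simp)]
        exact congrArg _ (List.filter_congr fun c hc => by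
          simp [show c ≠ b from fun h => hbL (h ▸ hc)])
      have hfilter' : (b :: L).filter (· ∈ s) = L.filter (· ∈ s) :=
        List.filter_cons_of_neg (by simpa using hbs)
      refine Submodule.mem_span_singleton.mpr ⟨1, ?_⟩
      rw [hfilter, hfilter', prodX_cons, one_smul]
    · have ha' : a ∈ L := by simpa [Ne.symm hb] using ha
      obtain ⟨c, hc⟩ := Submodule.mem_span_singleton.mp (ih hL ha')
      by_cases hbs : b ∈ s
      · have h₁ : (b :: L).filter (· ∈ s) = b :: L.filter (· ∈ s) :=
          List.filter_cons_of_pos (by simpa using hbs)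
        have h₂ : (b :: L).filter (· ∈ insert a s) = b :: L.filter (· ∈ insert a s) :=
          List.filter_cons_of_pos (by simp [hbs])
        refine Submodule.mem_span_singleton.mpr ⟨-c, ?_⟩
        rw [h₁, h₂, prodX_cons, prodX_cons, ← mul_assoc, N.x_mul_x, neg_mul, mul_assoc, ← hc,
          mul_smul_comm, neg_smul]
      · have h₁ : (b :: L).filter (· ∈ s) = L.filter (· ∈ s) :=
          List.filter_cons_of_neg (by simpa using hbs)
        have h₂ : (b :: L).filter (· ∈ insert a s) = L.filter (· ∈ insert a s) :=
          List.filter_cons_of_neg (by simp [hbs, hb])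
        rw [h₁, h₂]
        exact ih hL ha'

lemma x_mul_mon_eq_zero {a : Fin (n - 1)} {s : Finset (Fin (n - 1))} (has : a ∈ s) :
    N.x a * N.mon s = 0 :=
  N.x_mul_prodX_filter_eq_zero (List.mem_finRange a) has

lemma x_mul_mon_mem_span (a : Fin (n - 1)) (s : Finset (Fin (n - 1))) :
    N.x a * N.mon s ∈ k ∙ N.mon (insert a s) :=
  N.x_mul_prodX_filter_mem_span (List.nodup_finRange _) (List.mem_finRange a) s

lemma x_mul_bas_mem_span (a : Fin (n - 1)) (j : Fin 2) (s : Finset (Fin (n - 1))) :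
    N.x a * N.bas (j, s) ∈ k ∙ N.bas (j, insert a s) := by
  obtain ⟨c, hc⟩ := Submodule.mem_span_singleton.mp (N.x_mul_mon_mem_span a s)
  fin_cases j
  · exact Submodule.mem_span_singleton.mpr ⟨c, by simp [bas_apply, hc]⟩
  · refine Submodule.mem_span_singleton.mpr ⟨-c, ?_⟩
    simp only [bas_apply, Fin.mk_one, Fin.val_one, pow_one]
    rw [← mul_assoc, N.x_mul_g, neg_mul, mul_assoc, ← hc, mul_smul_comm, neg_smul]

lemma x_mul_bas_eq_zero {a : Fin (n - 1)} (j : Fin 2) {s : Finset (Fin (n - 1))} (has : a ∈ s) :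
    N.x a * N.bas (j, s) = 0 := by
  fin_cases j
  · simp [bas_apply, N.x_mul_mon_eq_zero has]
  · simp only [bas_apply, Fin.mk_one, Fin.val_one, pow_one]
    rw [← mul_assoc, N.x_mul_g, neg_mul, mul_assoc, N.x_mul_mon_eq_zero has, mul_zero, neg_zero]

def gGrade (j : Fin 2) : Submodule k H := Submodule.span k (N.bas '' {p | p.1 = j})

def xFilt (m : ℕ) : Submodule k H := Submodule.span k (N.bas '' {p | m ≤ p.2.card})

lemma bas_mem_gGrade (j : Fin 2) (s : Finset (Fin (n - 1))) : N.bas (j, s) ∈ N.gGrade j :=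
  Submodule.subset_span ⟨(j, s), rfl, rfl⟩

lemma bas_mem_xFilt {m : ℕ} (j : Fin 2) {s : Finset (Fin (n - 1))} (hs : m ≤ s.card) :
    N.bas (j, s) ∈ N.xFilt m :=
  Submodule.subset_span ⟨(j, s), hs, rfl⟩

lemma disjoint_gGrade_zero_one : Disjoint (N.gGrade 0) (N.gGrade 1) :=
  N.bas.linearIndependent.disjoint_span_image
    (Set.disjoint_left.mpr fun p (h₀ : p.1 = 0) (h₁ : p.1 = 1) => by simp [h₀] at h₁)

lemma xFilt_antitone {m m' : ℕ} (h : m ≤ m') : N.xFilt m' ≤ N.xFilt m :=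
  Submodule.span_mono (Set.image_mono fun _ hp => le_trans h hp)

lemma xFilt_eq_bot : N.xFilt (n - 1 + 1) = ⊥ := by
  have : {p : Fin 2 × Finset (Fin (n - 1)) | n - 1 + 1 ≤ p.2.card} = ∅ := by
    ext p
    simpa using (p.2.card_le_univ.trans_eq (Fintype.card_fin _)).trans_lt (Nat.lt_succ_self _)
  rw [xFilt, this, Set.image_empty, Submodule.span_empty]

lemma x_mul_mem_gGrade (a : Fin (n - 1)) {j : Fin 2} {v : H} (hv : v ∈ N.gGrade j) :
    N.x a * v ∈ N.gGrade j := by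
  refine Submodule.apply_mem_of_mem_span_image (LinearMap.mulLeft k (N.x a)) ?_ hv
  rintro ⟨j', s⟩ (rfl : j' = j)
  exact (Submodule.span_singleton_le_iff_mem _ _).mpr (N.bas_mem_gGrade _ _)
    (N.x_mul_bas_mem_span a j' s)

lemma g_mul_mem_gGrade {j : Fin 2} {v : H} (hv : v ∈ N.gGrade j) :
    N.g * v ∈ N.gGrade (j + 1) := by
  refine Submodule.apply_mem_of_mem_span_image (LinearMap.mulLeft k N.g) ?_ hv
  rintro ⟨j', s⟩ (rfl : j' = j)
  simpa [g_mul_bas] using N.bas_mem_gGrade (j' + 1) s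

lemma prodX_mul_mem_gGrade (l : List (Fin (n - 1))) {j : Fin 2} {v : H} (hv : v ∈ N.gGrade j) :
    N.prodX l * v ∈ N.gGrade j := by
  induction l with
  | nil => simpa [prodX] using hv
  | cons a l ih => simpa [prodX_cons, mul_assoc] using N.x_mul_mem_gGrade a ih

lemma mul_mem_gGrade {j j' : Fin 2} {u v : H} (hu : u ∈ N.gGrade j) (hv : v ∈ N.gGrade j') :
    u * v ∈ N.gGrade (j + j') := by
  refine Submodule.apply_mem_of_mem_span_image (LinearMap.mulRight k v) ?_ hu
  rintro ⟨j, s⟩ (rfl : j = _)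
  have hmon := N.prodX_mul_mem_gGrade ((List.finRange (n - 1)).filter (· ∈ s)) hv
  fin_cases j
  · simpa [bas_apply, mon] using hmon
  · simpa [bas_apply, mon, mul_assoc, add_comm] using N.g_mul_mem_gGrade hmon

lemma eq_and_eq_of_add_eq_add_of_mem_gGrade {u₀ u₁ v₀ v₁ : H} (hu₀ : u₀ ∈ N.gGrade 0)
    (hu₁ : u₁ ∈ N.gGrade 1) (hv₀ : v₀ ∈ N.gGrade 0) (hv₁ : v₁ ∈ N.gGrade 1)
    (h : u₀ + u₁ = v₀ + v₁) : u₀ = v₀ ∧ u₁ = v₁ := by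
  have hsub : u₀ - v₀ = v₁ - u₁ := by rw [sub_eq_sub_iff_add_eq_add, h, add_comm]
  have h0 := Submodule.disjoint_def.mp N.disjoint_gGrade_zero_one _ (sub_mem hu₀ hv₀)
    (hsub ▸ sub_mem hv₁ hu₁)
  exact ⟨sub_eq_zero.mp h0, (sub_eq_zero.mp (hsub ▸ h0)).symm⟩

lemma smul_eq_mul_of_mem_gGrade_zero {c : k} {z₀ z₁ w : H} (h₀ : z₀ ∈ N.gGrade 0)
    (h₁ : z₁ ∈ N.gGrade 1) (hw : w ∈ N.gGrade 0) (h : c • (z₀ + z₁) = (z₀ + z₁) * w) :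
    c • z₀ = z₀ * w := by
  refine (N.eq_and_eq_of_add_eq_add_of_mem_gGrade (Submodule.smul_mem _ c h₀)
    (Submodule.smul_mem _ c h₁) ?_ ?_ (by rw [← smul_add, h, add_mul])).1
  · simpa using N.mul_mem_gGrade h₀ hw
  · simpa using N.mul_mem_gGrade h₁ hw

lemma smul_eq_mul_of_mem_gGrade_one {c : k} {z₀ z₁ w : H} (h₀ : z₀ ∈ N.gGrade 0)
    (h₁ : z₁ ∈ N.gGrade 1) (hw : w ∈ N.gGrade 1) (h : c • (z₀ + z₁) = (z₀ + z₁) * w) :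
    c • z₁ = z₀ * w := by
  refine (N.eq_and_eq_of_add_eq_add_of_mem_gGrade (Submodule.smul_mem _ c h₀)
    (Submodule.smul_mem _ c h₁) ?_ ?_ (by rw [← smul_add, h, add_mul, add_comm])).2
  · simpa using N.mul_mem_gGrade h₁ hw
  · simpa using N.mul_mem_gGrade h₀ hw

lemma x_mul_mem_xFilt (a : Fin (n - 1)) {m : ℕ} {v : H} (hv : v ∈ N.xFilt m) :
    N.x a * v ∈ N.xFilt (m + 1) := by
  refine Submodule.apply_mem_of_mem_span_image (LinearMap.mulLeft k (N.x a)) ?_ hv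
  rintro ⟨j, s⟩ (hs : m ≤ s.card)
  by_cases has : a ∈ s
  · simp [N.x_mul_bas_eq_zero j has]
  · refine (Submodule.span_singleton_le_iff_mem _ _).mpr (N.bas_mem_xFilt j ?_)
      (N.x_mul_bas_mem_span a j s)
    rw [Finset.card_insert_of_notMem has]
    omega

lemma g_mul_mem_xFilt {m : ℕ} {v : H} (hv : v ∈ N.xFilt m) : N.g * v ∈ N.xFilt m := by
  refine Submodule.apply_mem_of_mem_span_image (LinearMap.mulLeft k N.g) ?_ hv
  rintro ⟨j, s⟩ (hs : m ≤ s.card)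
  simpa [g_mul_bas] using N.bas_mem_xFilt (j + 1) hs

lemma prodX_mul_mem_xFilt (l : List (Fin (n - 1))) {m : ℕ} {v : H} (hv : v ∈ N.xFilt m) :
    N.prodX l * v ∈ N.xFilt m := by
  induction l with
  | nil => simpa [prodX] using hv
  | cons a l ih =>
    rw [prodX_cons, mul_assoc]
    exact N.xFilt_antitone (Nat.le_succ m) (N.x_mul_mem_xFilt a ih)

lemma mul_mem_xFilt_succ {m : ℕ} {u v : H} (hu : u ∈ N.xFilt 1) (hv : v ∈ N.xFilt m) :
    u * v ∈ N.xFilt (m + 1) := by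
  refine Submodule.apply_mem_of_mem_span_image (LinearMap.mulRight k v) ?_ hu
  rintro ⟨j, s⟩ (hs : 1 ≤ s.card)
  obtain ⟨i, hi⟩ := Finset.card_pos.mp hs
  obtain ⟨a, l, hl⟩ := List.exists_cons_of_ne_nil
    (List.ne_nil_of_mem (a := i) (l := (List.finRange (n - 1)).filter (· ∈ s)) (by simpa using hi))
  have hmon : N.mon s * v ∈ N.xFilt (m + 1) := by
    rw [mon, hl, prodX_cons, mul_assoc]
    exact N.x_mul_mem_xFilt a (N.prodX_mul_mem_xFilt l hv)
  fin_cases j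
  · simpa [bas_apply] using hmon
  · simpa [bas_apply, mul_assoc] using N.g_mul_mem_xFilt hmon

/-- `u = c⁻¹ u²` pushes `u` down the filtration, which ends in `0`. -/
lemma eq_zero_of_mul_self_eq_smul {u : H} (hu : u ∈ N.xFilt 1) {c : k} (hc : c ≠ 0)
    (huu : u * u = c • u) : u = 0 := by
  have hmem : ∀ m, u ∈ N.xFilt (m + 1) := by
    intro m
    induction m with
    | zero => exact hu
    | succ m ih =>
      have h := Submodule.smul_mem _ c⁻¹ (N.mul_mem_xFilt_succ hu ih)
      rwa [huu, smul_smul, inv_mul_cancel₀ hc, one_smul] at h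
  simpa [xFilt_eq_bot] using hmem (n - 1)

lemma coord_bas (p q : Fin 2 × Finset (Fin (n - 1))) :
    N.bas.coord p (N.bas q) = if q = p then 1 else 0 := by
  simp [Finsupp.single_apply]

lemma repr_one (p : Fin 2 × Finset (Fin (n - 1))) :
    N.bas.repr 1 p = if p = (0, ∅) then 1 else 0 := by
  rw [← N.bas_zero_empty, Module.Basis.repr_self, Finsupp.single_apply]
  simp only [eq_comm]

lemma repr_eq_zero_of_mem_gGrade {j : Fin 2} {v : H} (hv : v ∈ N.gGrade j)
    {p : Fin 2 × Finset (Fin (n - 1))} (hp : p.1 ≠ j) : N.bas.repr v p = 0 := by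
  by_contra h
  exact hp ((N.bas.mem_span_image.mp hv) (Finsupp.mem_support_iff.mpr h))

lemma coord_comp_mulLeft_g (j : Fin 2) (s : Finset (Fin (n - 1))) :
    N.bas.coord (j, s) ∘ₗ LinearMap.mulLeft k N.g = N.bas.coord (j + 1, s) := by
  refine N.bas.ext fun ⟨j', t⟩ => ?_
  simp only [LinearMap.comp_apply, LinearMap.mulLeft_apply, g_mul_bas, coord_bas]
  congr 1
  fin_cases j <;> fin_cases j' <;> simp

lemma coord_empty_comp_mulLeft_x (j : Fin 2) (a : Fin (n - 1)) :
    N.bas.coord (j, ∅) ∘ₗ LinearMap.mulLeft k (N.x a) = 0 := by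
  refine N.bas.ext fun ⟨j', t⟩ => ?_
  obtain ⟨c, hc⟩ := Submodule.mem_span_singleton.mp (N.x_mul_bas_mem_span a j' t)
  simp [← hc]

lemma coord_singleton_comp_mulLeft_x (i a : Fin (n - 1)) :
    N.bas.coord (0, {i}) ∘ₗ LinearMap.mulLeft k (N.x a) =
      if a = i then N.bas.coord (0, ∅) else 0 := by
  refine N.bas.ext fun ⟨j, t⟩ => ?_
  by_cases hjt : j = 0 ∧ t = ∅
  · obtain ⟨rfl, rfl⟩ := hjt
    rw [LinearMap.comp_apply, LinearMap.mulLeft_apply, bas_zero_empty, mul_one,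
      ← bas_zero_singleton, coord_bas]
    by_cases hai : a = i <;> simp [hai, repr_one]
  have hrhs : (if a = i then N.bas.coord (0, ∅) else 0) (N.bas (j, t)) = 0 := by
    split_ifs
    · rw [coord_bas, if_neg (fun h => hjt (Prod.ext_iff.mp h))]
    · rfl
  rw [hrhs, LinearMap.comp_apply, LinearMap.mulLeft_apply]
  by_cases hat : a ∈ t
  · rw [N.x_mul_bas_eq_zero j hat, map_zero]
  obtain ⟨c, hc⟩ := Submodule.mem_span_singleton.mp (N.x_mul_bas_mem_span a j t)
  rw [← hc, map_smul, coord_bas, if_neg, smul_zero]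
  intro h
  simp only [Prod.mk.injEq] at h
  obtain ⟨rfl, hins⟩ := h
  have hti : t ⊆ {i} := by rw [← hins]; exact Finset.subset_insert a t
  have ht : t = {i} :=
    (Finset.subset_singleton_iff.mp hti).resolve_left fun h => hjt ⟨rfl, h⟩
  exact hat (by simpa [ht] using hins)

lemma rCont_g_mul (φ : H →ₗ[k] k) (v : H) :
    rCont k H φ (N.g * v) = N.g * rCont k H (φ ∘ₗ LinearMap.mulLeft k N.g) v :=
  rCont_mul_of_comul_eq_tmul φ N.comul_g v

lemma rCont_x_mul (φ : H →ₗ[k] k) (a : Fin (n - 1)) (v : H) :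
    rCont k H φ (N.x a * v) =
      N.x a * rCont k H φ v + N.g * rCont k H (φ ∘ₗ LinearMap.mulLeft k (N.x a)) v := by
  rw [rCont_mul_of_comul_eq_add φ (N.comul_x a), LinearMap.mulLeft_one, LinearMap.comp_id]

lemma rCont_coord_empty_prodX (j : Fin 2) (l : List (Fin (n - 1))) :
    rCont k H (N.bas.coord (j, ∅)) (N.prodX l) = N.bas.coord (j, ∅) 1 • N.prodX l := by
  induction l with
  | nil => simp [prodX, rCont_one]
  | cons a l ih =>
    rw [prodX_cons, rCont_x_mul, coord_empty_comp_mulLeft_x, rCont_zero, mul_zero, add_zero, ih,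
      mul_smul_comm]

lemma rCont_prodX_eq_zero_of_forall_gGrade_zero (l : List (Fin (n - 1))) {φ : H →ₗ[k] k}
    (hφ : ∀ v ∈ N.gGrade 0, φ v = 0) : rCont k H φ (N.prodX l) = 0 := by
  induction l generalizing φ with
  | nil => simp [prodX, rCont_one, hφ 1 (N.bas_zero_empty ▸ N.bas_mem_gGrade 0 ∅)]
  | cons a l ih =>
    rw [prodX_cons, rCont_x_mul, ih (φ := φ) hφ,
      ih (φ := φ ∘ₗ LinearMap.mulLeft k (N.x a)) fun v hv => hφ _ (N.x_mul_mem_gGrade a hv),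
      mul_zero, mul_zero, add_zero]

lemma rCont_coord_singleton_prodX (i : Fin (n - 1)) {l : List (Fin (n - 1))} (hl : l.Nodup) :
    rCont k H (N.bas.coord (0, {i})) (N.prodX l) =
      if i ∈ l then (-1 : k) ^ l.idxOf i • (N.g * N.prodX (l.erase i)) else 0 := by
  induction l with
  | nil => simp [prodX, rCont_one, repr_one]
  | cons a l ih =>
    obtain ⟨hal, hl⟩ := List.nodup_cons.mp hl
    rw [prodX_cons, rCont_x_mul, coord_singleton_comp_mulLeft_x, ih hl]
    by_cases hai : a = i
    · subst hai
      simp [hal, rCont_coord_empty_prodX, repr_one]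
    · simp only [hai, ↓reduceIte, rCont_zero, mul_zero, add_zero, List.mem_cons, Ne.symm hai,
        false_or, List.idxOf_cons_ne l hai,
        List.erase_cons_tail (a := i) (b := a) (l := l) (by simpa using hai), prodX_cons]
      split_ifs
      · rw [mul_smul_comm, ← mul_assoc, N.x_mul_g, neg_mul, smul_neg, pow_succ, mul_neg_one,
          neg_smul, mul_assoc]
      · rw [mul_zero]

lemma rCont_coord_empty_bas (j j' : Fin 2) (s : Finset (Fin (n - 1))) :
    rCont k H (N.bas.coord (j, ∅)) (N.bas (j', s)) = if j' = j then N.bas (j', s) else 0 := by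
  have h (j : Fin 2) : rCont k H (N.bas.coord (j, ∅)) (N.mon s) = if j = 0 then N.mon s else 0 := by
    rw [mon, rCont_coord_empty_prodX, ← N.bas_zero_empty, coord_bas]
    by_cases hj : j = 0 <;> simp [hj, eq_comm]
  fin_cases j' <;> simp only [bas_apply] <;> fin_cases j <;>
    simp [rCont_g_mul, coord_comp_mulLeft_g, h]

lemma rCont_coord_one_singleton_bas_zero (i : Fin (n - 1)) (s : Finset (Fin (n - 1))) :
    rCont k H (N.bas.coord (1, {i})) (N.bas (0, s)) = 0 := by
  simpa [bas_apply, mon] using N.rCont_prodX_eq_zero_of_forall_gGrade_zero _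
    fun v hv => N.repr_eq_zero_of_mem_gGrade hv (p := (1, {i})) (by simp)

lemma rCont_coord_one_singleton_bas_one (i : Fin (n - 1)) (s : Finset (Fin (n - 1))) :
    rCont k H (N.bas.coord (1, {i})) (N.bas (1, s)) =
      if i ∈ s then
        (-1 : k) ^ ((List.finRange (n - 1)).filter (· ∈ s)).idxOf i • N.bas (0, s.erase i)
      else 0 := by
  have hL : ((List.finRange (n - 1)).filter (· ∈ s)).Nodup := (List.nodup_finRange _).filter _
  rw [bas_apply, Fin.val_one, pow_one, rCont_g_mul, coord_comp_mulLeft_g, mon,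
    show (1 + 1 : Fin 2) = 0 from rfl, N.rCont_coord_singleton_prodX i hL]
  simp only [List.mem_filter, List.mem_finRange, decide_eq_true_eq, true_and]
  split_ifs
  · rw [mul_smul_comm, ← mul_assoc, g_mul_g, one_mul, (List.nodup_finRange _).erase_filter_mem,
      bas_apply, Fin.val_zero, pow_zero, one_mul, mon]
  · rw [mul_zero]

lemma rCont_coord_empty_add (v : H) :
    rCont k H (N.bas.coord (0, ∅)) v + rCont k H (N.bas.coord (1, ∅)) v = v := by
  have h : rCont k H (N.bas.coord (0, ∅)) + rCont k H (N.bas.coord (1, ∅)) = LinearMap.id :=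
    N.bas.ext fun ⟨j, s⟩ => by fin_cases j <;> simp [rCont_coord_empty_bas]
  exact LinearMap.congr_fun h v

lemma repr_rCont_coord_empty (j : Fin 2) (v : H) (p : Fin 2 × Finset (Fin (n - 1))) :
    N.bas.repr (rCont k H (N.bas.coord (j, ∅)) v) p = if p.1 = j then N.bas.repr v p else 0 := by
  have h : N.bas.coord p ∘ₗ rCont k H (N.bas.coord (j, ∅)) =
      if p.1 = j then N.bas.coord p else 0 := by
    refine N.bas.ext fun ⟨j', s⟩ => ?_
    simp only [LinearMap.comp_apply, rCont_coord_empty_bas]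
    by_cases hp : p.1 = j <;> by_cases hj' : j' = j <;>
      simp only [hp, hj', if_true, if_false, map_zero, LinearMap.zero_apply, coord_bas] <;>
      rw [if_neg] <;> rintro rfl <;> simp_all
  have hv := LinearMap.congr_fun h v
  by_cases hp : p.1 = j <;> simp only [hp, if_true, if_false] at hv ⊢ <;> simpa using hv

lemma rCont_coord_empty_mem_gGrade (j : Fin 2) (v : H) :
    rCont k H (N.bas.coord (j, ∅)) v ∈ N.gGrade j := by
  refine N.bas.mem_span_image.mpr fun p hp => ?_
  rw [Finset.mem_coe, Finsupp.mem_support_iff, repr_rCont_coord_empty] at hp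
  by_contra h
  exact hp (if_neg h)

lemma rCont_coord_one_singleton_mem_gGrade_zero (i : Fin (n - 1)) (v : H) :
    rCont k H (N.bas.coord (1, {i})) v ∈ N.gGrade 0 := by
  refine Submodule.apply_mem_of_mem_span_image _ (S := Set.univ) ?_
    (by rw [Set.image_univ, N.bas.span_eq]; trivial)
  rintro ⟨j, s⟩ -
  obtain rfl | rfl : j = 0 ∨ j = 1 := by omega
  · simp [rCont_coord_one_singleton_bas_zero]
  · simp only [rCont_coord_one_singleton_bas_one]
    split_ifs
    · exact Submodule.smul_mem _ _ (N.bas_mem_gGrade 0 _)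
    · exact Submodule.zero_mem _

lemma repr_rCont_coord_one_singleton {i : Fin (n - 1)} {s : Finset (Fin (n - 1))} (hi : i ∈ s)
    (v : H) : N.bas.repr (rCont k H (N.bas.coord (1, {i})) v) (0, s.erase i) =
      (-1 : k) ^ ((List.finRange (n - 1)).filter (· ∈ s)).idxOf i * N.bas.repr v (1, s) := by
  have h : N.bas.coord (0, s.erase i) ∘ₗ rCont k H (N.bas.coord (1, {i})) =
      (-1 : k) ^ ((List.finRange (n - 1)).filter (· ∈ s)).idxOf i • N.bas.coord (1, s) := by
    refine N.bas.ext fun ⟨j, t⟩ => ?_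
    obtain rfl | rfl : j = 0 ∨ j = 1 := by omega
    · simp [rCont_coord_one_singleton_bas_zero]
    · simp only [LinearMap.comp_apply, rCont_coord_one_singleton_bas_one, LinearMap.smul_apply,
        coord_bas]
      by_cases hts : t = s
      · subst hts; simp [hi]
      by_cases hit : i ∈ t
      · have : t.erase i ≠ s.erase i := fun h =>
          hts (by rw [← Finset.insert_erase hit, h, Finset.insert_erase hi])
        simp [hit, hts, this]
      · simp [hit, hts]
  simpa using LinearMap.congr_fun h v

lemma rCont_coord_one_empty_eq {v : H} (hv : ∀ s : Finset (Fin (n - 1)), 1 < s.card →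
    N.bas.repr v (1, s) = 0) :
    rCont k H (N.bas.coord (1, ∅)) v =
      N.bas.repr v (1, ∅) • N.g + ∑ i, N.bas.repr v (1, {i}) • (N.g * N.x i) := by
  set v₁ := rCont k H (N.bas.coord (1, ∅)) v
  rw [← N.bas.sum_repr v₁, Fintype.sum_prod_type, Fin.sum_univ_two]
  simp only [v₁, repr_rCont_coord_empty, Fin.isValue, zero_ne_one, if_false, zero_smul,
    Finset.sum_const_zero, zero_add, if_true]
  rw [Finset.sum_eq_empty_add_sum_singleton _ fun s hs => by simp [hv s hs], bas_one_empty]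
  simp only [bas_one_singleton]

lemma comul_sum_smul_x (c : Fin (n - 1) → k) :
    Coalgebra.comul (R := k) (∑ i, c i • N.x i) =
      (∑ i, c i • N.x i) ⊗ₜ[k] (1 : H) + N.g ⊗ₜ[k] (∑ i, c i • N.x i) := by
  simp [map_sum, N.comul_x, smul_add, Finset.sum_add_distrib, TensorProduct.sum_tmul,
    TensorProduct.tmul_sum, TensorProduct.smul_tmul', TensorProduct.tmul_smul]

lemma sum_smul_x_mul_g (c : Fin (n - 1) → k) :
    (∑ i, c i • N.x i) * N.g = -(N.g * ∑ i, c i • N.x i) := by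
  simp [Finset.sum_mul, Finset.mul_sum, N.x_mul_g]

lemma sum_smul_x_mul_self (h2 : (2 : k) ≠ 0) (c : Fin (n - 1) → k) :
    (∑ i, c i • N.x i) * (∑ i, c i • N.x i) = 0 := by
  have hsq : (∑ i, c i • N.x i) * (∑ i, c i • N.x i) =
      ∑ i, ∑ j, (c i * c j) • (N.x i * N.x j) := by
    simp only [Finset.sum_mul_sum, smul_mul_smul_comm]
  have h : (∑ i, c i • N.x i) * (∑ i, c i • N.x i) =
      -((∑ i, c i • N.x i) * (∑ i, c i • N.x i)) := by
    conv_lhs => rw [hsq, Finset.sum_comm]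
    rw [hsq, ← Finset.sum_neg_distrib]
    refine Finset.sum_congr rfl fun i _ => ?_
    rw [← Finset.sum_neg_distrib]
    refine Finset.sum_congr rfl fun j _ => ?_
    rw [N.x_mul_x, smul_neg, mul_comm]
  rw [eq_neg_iff_add_eq_zero, ← two_smul k] at h
  exact (smul_eq_zero.mp h).resolve_left h2

lemma isSymmPartialCoaction_half_sub (h2 : (2 : k) ≠ 0) (α : Fin (n - 1) → k) :
    IsSymmPartialCoaction k H ((2 : k)⁻¹ • (1 + N.g) - ∑ i, α i • (N.g * N.x i)) := by
  set y := ∑ i, α i • N.x i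
  have hy : ∑ i, α i • (N.g * N.x i) = N.g * y := by simp [y, Finset.mul_sum]
  have hyg : y * N.g = -(N.g * y) := N.sum_smul_x_mul_g α
  rw [hy, sub_eq_add_neg]
  refine isSymmPartialCoaction_half_add h2 N.comul_g N.counit_g N.g_mul_g ?_ ?_ ?_ ?_
  · rw [map_neg, Bialgebra.comul_mul, N.comul_g, N.comul_sum_smul_x, mul_add,
      Algebra.TensorProduct.tmul_mul_tmul, Algebra.TensorProduct.tmul_mul_tmul, mul_one, N.g_mul_g,
      neg_add, ← TensorProduct.neg_tmul, ← TensorProduct.tmul_neg]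
  · simp [y, Bialgebra.counit_mul, N.counit_x]
  · rw [neg_mul_neg, mul_assoc, ← mul_assoc y, hyg, neg_mul, mul_neg, ← mul_assoc,
      ← mul_assoc, N.g_mul_g, one_mul, N.sum_smul_x_mul_self h2, neg_zero]
  · rw [mul_neg, neg_mul, neg_neg, ← mul_assoc, N.g_mul_g, one_mul, mul_assoc, hyg, mul_neg,
      ← mul_assoc, N.g_mul_g, one_mul]

end NicholsData

namespace IsPartialCoaction

variable {k H : Type*} [Field k] [Ring H] [HopfAlgebra k H] {n : ℕ} (N : NicholsData k n H)
variable {z : H} (hz : IsPartialCoaction k H z)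
include hz

lemma smul_rCont_eq_mul_of_mem_gGrade_zero {q : Fin 2 × Finset (Fin (n - 1))}
    (hq : rCont k H (N.bas.coord q) z ∈ N.gGrade 0) :
    N.bas.repr z q • rCont k H (N.bas.coord (0, ∅)) z =
      rCont k H (N.bas.coord (0, ∅)) z * rCont k H (N.bas.coord q) z :=
  N.smul_eq_mul_of_mem_gGrade_zero (N.rCont_coord_empty_mem_gGrade 0 z)
    (N.rCont_coord_empty_mem_gGrade 1 z) hq
    (by rw [N.rCont_coord_empty_add]; exact hz.smul_eq_mul_rCont (N.bas.coord _))

lemma smul_rCont_coord_one_empty :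
    N.bas.repr z (1, ∅) • rCont k H (N.bas.coord (1, ∅)) z =
      rCont k H (N.bas.coord (0, ∅)) z * rCont k H (N.bas.coord (1, ∅)) z :=
  N.smul_eq_mul_of_mem_gGrade_one (N.rCont_coord_empty_mem_gGrade 0 z)
    (N.rCont_coord_empty_mem_gGrade 1 z) (N.rCont_coord_empty_mem_gGrade 1 z)
    (by rw [N.rCont_coord_empty_add]; exact hz.smul_eq_mul_rCont (N.bas.coord _))

lemma repr_zero_empty_add_repr_one_empty : N.bas.repr z (0, ∅) + N.bas.repr z (1, ∅) = 1 := by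
  have h := congrArg (Coalgebra.counit (R := k)) (N.rCont_coord_empty_add z)
  rwa [map_add, counit_rCont, counit_rCont, hz.1] at h

lemma repr_one_empty_mul_self :
    N.bas.repr z (1, ∅) * N.bas.repr z (1, ∅) = N.bas.repr z (0, ∅) * N.bas.repr z (1, ∅) := by
  have h := congrArg (Coalgebra.counit (R := k)) (hz.smul_rCont_coord_one_empty N)
  rwa [map_smul, Bialgebra.counit_mul, counit_rCont, counit_rCont, smul_eq_mul] at h

lemma rCont_coord_zero_empty_eq_smul_one (ha : N.bas.repr z (0, ∅) ≠ 0) :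
    rCont k H (N.bas.coord (0, ∅)) z = N.bas.repr z (0, ∅) • 1 := by
  set a := N.bas.repr z (0, ∅)
  set z₀ := rCont k H (N.bas.coord (0, ∅)) z
  have hz₀ : a • z₀ = z₀ * z₀ :=
    hz.smul_rCont_eq_mul_of_mem_gGrade_zero N (N.rCont_coord_empty_mem_gGrade 0 z)
  have hu : z₀ - a • 1 ∈ N.xFilt 1 := by
    refine N.bas.mem_span_image.mpr fun ⟨j, s⟩ hp => ?_
    rw [Finset.mem_coe, Finsupp.mem_support_iff] at hp
    by_contra hs
    obtain rfl : s = ∅ := Finset.card_eq_zero.mp (by simpa using hs)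
    obtain rfl | rfl : j = 0 ∨ j = 1 := by omega
    · simp [z₀, a, N.repr_rCont_coord_empty, N.repr_one] at hp
    · simp [z₀, N.repr_rCont_coord_empty, N.repr_one] at hp
  have huu : (z₀ - a • 1) * (z₀ - a • 1) = (-a) • (z₀ - a • 1) := by
    simp only [sub_mul, mul_sub, smul_mul_assoc, mul_smul_comm, one_mul, mul_one, ← hz₀]
    module
  exact sub_eq_zero.mp (N.eq_zero_of_mul_self_eq_smul hu (neg_ne_zero.mpr ha) huu)

lemma eq_one_of_repr_one_empty_eq_zero (hb : N.bas.repr z (1, ∅) = 0) : z = 1 := by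
  have ha : N.bas.repr z (0, ∅) = 1 := by
    simpa [hb] using hz.repr_zero_empty_add_repr_one_empty N
  have hz₀ := hz.rCont_coord_zero_empty_eq_smul_one N (by simp [ha])
  have hz₁ := hz.smul_rCont_coord_one_empty N
  rw [hb, zero_smul, hz₀, ha, one_smul, one_mul] at hz₁
  rw [← N.rCont_coord_empty_add z, hz₀, ha, one_smul, ← hz₁, add_zero]

lemma rCont_coord_one_singleton_eq_smul_one (ha : N.bas.repr z (0, ∅) ≠ 0) (i : Fin (n - 1)) :
    rCont k H (N.bas.coord (1, {i})) z = N.bas.repr z (1, {i}) • 1 := by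
  have h := hz.smul_rCont_eq_mul_of_mem_gGrade_zero N
    (N.rCont_coord_one_singleton_mem_gGrade_zero i z)
  rw [hz.rCont_coord_zero_empty_eq_smul_one N ha, smul_mul_assoc, one_mul, smul_smul, mul_comm,
    ← smul_smul] at h
  exact (smul_right_injective H ha h).symm

lemma repr_one_eq_zero_of_one_lt_card (ha : N.bas.repr z (0, ∅) ≠ 0)
    {s : Finset (Fin (n - 1))} (hs : 1 < s.card) : N.bas.repr z (1, s) = 0 := by
  obtain ⟨i, hi⟩ := Finset.card_pos.mp (zero_lt_one.trans hs)
  have h := N.repr_rCont_coord_one_singleton hi z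
  have herase : s.erase i ≠ ∅ := fun h => by
    have hcard := Finset.card_erase_of_mem hi
    rw [h, Finset.card_empty] at hcard
    omega
  rw [hz.rCont_coord_one_singleton_eq_smul_one N ha, map_smul, Finsupp.smul_apply, N.repr_one] at h
  simpa [herase] using h.symm

theorem eq_one_or_eq_half_sub (h2 : (2 : k) ≠ 0) :
    z = 1 ∨ ∃ α : Fin (n - 1) → k, z = (2 : k)⁻¹ • (1 + N.g) - ∑ i, α i • (N.g * N.x i) := by
  by_cases hb : N.bas.repr z (1, ∅) = 0
  · exact Or.inl (hz.eq_one_of_repr_one_empty_eq_zero N hb)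
  have hab : N.bas.repr z (1, ∅) = N.bas.repr z (0, ∅) :=
    mul_right_cancel₀ hb (hz.repr_one_empty_mul_self N)
  have hsum := hz.repr_zero_empty_add_repr_one_empty N
  have ha : N.bas.repr z (0, ∅) = 2⁻¹ :=
    eq_inv_of_mul_eq_one_left (by linear_combination hsum - hab)
  have ha₀ : N.bas.repr z (0, ∅) ≠ 0 := by simp [ha, h2]
  refine Or.inr ⟨fun i => -N.bas.repr z (1, {i}), ?_⟩
  conv_lhs => rw [← N.rCont_coord_empty_add z]
  rw [hz.rCont_coord_zero_empty_eq_smul_one N ha₀, N.rCont_coord_one_empty_eq fun s hs =>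
      hz.repr_one_eq_zero_of_one_lt_card N ha₀ hs, hab, ha]
  simp only [neg_smul, Finset.sum_neg_distrib, sub_neg_eq_add, smul_add, add_assoc]

end IsPartialCoaction

theorem thm_4_2_2_general {k H : Type*} [Field k] [Ring H] [HopfAlgebra k H]
    {n : ℕ} (hchar : ringChar k ≠ 2)
    (N : NicholsData k n H) (z : H) :
    (IsPartialCoaction k H z ↔
      z = 1 ∨
      ∃ α : Fin (n - 1) → k,
        z = (2 : k)⁻¹ • ((1 : H) + N.g) - ∑ i, α i • (N.g * N.x i)) ∧
    (IsPartialCoaction k H z → IsSymmPartialCoaction k H z) := by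
  have h2 : (2 : k) ≠ 0 := Ring.two_ne_zero hchar
  have hsymm : z = 1 ∨ (∃ α : Fin (n - 1) → k,
      z = (2 : k)⁻¹ • ((1 : H) + N.g) - ∑ i, α i • (N.g * N.x i)) →
      IsSymmPartialCoaction k H z := by
    rintro (rfl | ⟨α, rfl⟩)
    · exact isSymmPartialCoaction_one
    · exact N.isSymmPartialCoaction_half_sub h2 α
  exact ⟨⟨fun hz => hz.eq_one_or_eq_half_sub N h2, fun h => (hsymm h).1⟩,
    fun hz => hsymm (hz.eq_one_or_eq_half_sub N h2)⟩

/-- Theorem 4.2.2: an element `z` of the Nichols Hopf algebra `H_{2^n}` is a partial coaction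
of `H_{2^n}` on `k` if and only if `z = 1` (the global coaction) or
`z = z_α = (1+g)/2 − Σ_{i=1}^{n−1} α_i·g x_i` for some `α ∈ k^{n−1}`.
Moreover, all these partial coactions are symmetric. -/
theorem thm_4_2_2 {k H : Type*} [Field k] [Ring H] [HopfAlgebra k H]
    {n : ℕ} (hn : 2 ≤ n) (hchar : ringChar k ≠ 2)
    (N : NicholsData k n H) (z : H) :
    (IsPartialCoaction k H z ↔
      z = 1 ∨
      ∃ α : Fin (n - 1) → k,
        z = (2 : k)⁻¹ • ((1 : H) + N.g) - ∑ i, α i • (N.g * N.x i)) ∧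
    (IsPartialCoaction k H z → IsSymmPartialCoaction k H z) :=
  thm_4_2_2_general hchar N z
end

section
/- Let G be a group and k a field. (1) For every subgroup N of G, the linear map λ_N : kG → k defined on the canonical basis by λ_N(g) = 1 if g ∈ N and λ_N(g) = 0 otherwise is a symmetric partial action of the group algebra kG on k. (2) Conversely, if λ : kG → k is a partial action of kG on k, then λ(g) ∈ {0, 1} for every g ∈ G, the set N = {g ∈ G : λ(g) = 1} = {g ∈ G : λ(g) ≠ 0} is a subgroup of G, and λ = λ_N. (Example 2.2.2) -/
/-!
On a group-like element `g` both `h ↦ Σ λ(h₁) h₂` and `h ↦ Σ h₁ λ(h₂)` are multiplication by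
`λ(g)`, so by bilinearity each of the two partial-action identities amounts to
`λ(g)λ(h) = λ(g)λ(gh)` on `G`; in particular symmetry is automatic. Taking `h = 1` makes every
`λ(g)` idempotent, hence `0` or `1`, and then the identity says exactly that `{g | λ(g) = 1}` is
closed under products and inverses.
-/

open scoped TensorProduct
open scoped Classical

/-- A realization of the group algebra `kG` as a Hopf algebra: a Hopf algebra `H` over `k`
with a `k`-basis indexed by `G` whose elements multiply like `G` and are group-like. -/
structure GroupAlgebraData (k : Type*) [Field k] (G : Type*) [Group G] (H : Type*)
    [Ring H] [HopfAlgebra k H] where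
  basis : Module.Basis G k H
  basis_one : basis 1 = 1
  basis_mul : ∀ g h : G, basis g * basis h = basis (g * h)
  comul_basis : ∀ g : G, Coalgebra.comul (R := k) (basis g) = basis g ⊗ₜ[k] basis g
  counit_basis : ∀ g : G, Coalgebra.counit (R := k) (basis g) = 1

/-- The shape a partial action of `kG` on `k` takes on the group elements. -/
def IsGroupPartialAction {G M : Type*} [Group G] [Mul M] [One M] (f : G → M) : Prop :=
  f 1 = 1 ∧ ∀ g h : G, f g * f h = f g * f (g * h)

namespace IsGroupPartialAction

variable {G M : Type*} [Group G]

theorem eq_zero_or_one [MonoidWithZero M] [IsLeftCancelMulZero M] {f : G → M}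
    (hf : IsGroupPartialAction f) (g : G) : f g = 0 ∨ f g = 1 := by
  have hidem : IsIdempotentElem (f g) := by
    simpa [IsIdempotentElem, hf.1] using (hf.2 g 1).symm
  exact IsIdempotentElem.iff_eq_zero_or_one.1 hidem

def subgroup [MulOneClass M] {f : G → M} (hf : IsGroupPartialAction f) : Subgroup G where
  carrier := {g | f g = 1}
  one_mem' := hf.1
  mul_mem' {a b} (ha : f a = 1) (hb : f b = 1) := by
    simpa [ha, hb] using (hf.2 a b).symm
  inv_mem' {a} (ha : f a = 1) := by
    simpa [ha, hf.1] using hf.2 a a⁻¹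

theorem mem_subgroup [MulOneClass M] {f : G → M} (hf : IsGroupPartialAction f) {g : G} :
    g ∈ hf.subgroup ↔ f g = 1 :=
  Iff.rfl

theorem eq_ite_mem_subgroup [MonoidWithZero M] [IsLeftCancelMulZero M] {f : G → M}
    (hf : IsGroupPartialAction f) (g : G) : f g = if g ∈ hf.subgroup then 1 else 0 := by
  rcases hf.eq_zero_or_one g with h | h <;> simp [mem_subgroup, h]

end IsGroupPartialAction

theorem isGroupPartialAction_ite_mem {G M : Type*} [Group G] [MulZeroOneClass M]
    (N : Subgroup G) : IsGroupPartialAction fun g => if g ∈ N then (1 : M) else 0 := by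
  refine ⟨by simp [N.one_mem], fun g h => ?_⟩
  by_cases hg : g ∈ N
  · simp [hg, N.mul_mem_cancel_left hg]
  · simp [hg]

section GroupLike

variable {k H : Type*} [CommSemiring k] [Semiring H] [Bialgebra k H] (lam : H →ₗ[k] k)
  {x : H}

theorem lCont_apply_of_comul_eq (hx : Coalgebra.comul (R := k) x = x ⊗ₜ[k] x) :
    lCont k H lam x = lam x • x := by
  simp [lCont, hx]

theorem rCont_apply_of_comul_eq (hx : Coalgebra.comul (R := k) x = x ⊗ₜ[k] x) :
    rCont k H lam x = lam x • x := by
  simp [rCont, hx]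

end GroupLike

namespace GroupAlgebraData

variable {k G H : Type*} [Field k] [Group G] [Ring H] [HopfAlgebra k H]
  (A : GroupAlgebraData k G H) {lam : H →ₗ[k] k}

/-- Both defining identities of a (symmetric) partial action are bilinear in `(h, y)`, so they
can be checked on basis elements, where `c` acts diagonally. -/
theorem forall_mul_eq_iff {c : H →ₗ[k] H}
    (hc : ∀ g : G, c (A.basis g) = lam (A.basis g) • A.basis g) :
    (∀ h y : H, lam h * lam y = lam (c h * y)) ↔
      ∀ g y : G, lam (A.basis g) * lam (A.basis y) = lam (A.basis g) * lam (A.basis (g * y)) := by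
  have hbasis : ∀ g y : G,
      lam (c (A.basis g) * A.basis y) = lam (A.basis g) * lam (A.basis (g * y)) := by
    intro g y
    rw [hc, smul_mul_assoc, map_smul, A.basis_mul, smul_eq_mul]
  refine ⟨fun h g y => (h _ _).trans (hbasis g y), fun h => ?_⟩
  have hbilin : (LinearMap.mul k k).compl₁₂ lam lam = ((LinearMap.mul k H).comp c).compr₂ lam :=
    A.basis.ext fun g => A.basis.ext fun y => by simpa [hbasis] using h g y
  exact fun h y => LinearMap.congr_fun (LinearMap.congr_fun hbilin h) y

theorem isPartialAction_iff :
    IsPartialAction k H lam ↔ IsGroupPartialAction fun g => lam (A.basis g) := by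
  rw [IsPartialAction, IsGroupPartialAction, A.basis_one,
    A.forall_mul_eq_iff fun g => lCont_apply_of_comul_eq lam (A.comul_basis g)]

theorem isSymmPartialAction_iff :
    IsSymmPartialAction k H lam ↔ IsGroupPartialAction fun g => lam (A.basis g) := by
  rw [IsSymmPartialAction, A.isPartialAction_iff,
    A.forall_mul_eq_iff fun g => rCont_apply_of_comul_eq lam (A.comul_basis g)]
  exact and_iff_left_of_imp And.right

end GroupAlgebraData

/-- Example 2.2.2: let `G` be a group and `k` a field.
(1) For every subgroup `N` of `G`, the linear map `λ_N : kG → k` defined on the canonical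
basis by `λ_N(g) = 1` if `g ∈ N` and `λ_N(g) = 0` otherwise is a symmetric partial action of
the group algebra `kG` on `k`.
(2) Conversely, if `λ : kG → k` is a partial action of `kG` on `k`, then `λ(g) ∈ {0, 1}` for
every `g ∈ G`, and the set `N = {g ∈ G : λ(g) = 1} = {g ∈ G : λ(g) ≠ 0}` is a subgroup of `G`
with `λ = λ_N`. -/
theorem example_2_2_2 {k G H : Type*} [Field k] [Group G] [Ring H] [HopfAlgebra k H]
    (A : GroupAlgebraData k G H) :
    (∀ N : Subgroup G, ∀ lam : H →ₗ[k] k,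
      (∀ g : G, lam (A.basis g) = if g ∈ N then 1 else 0) →
      IsSymmPartialAction k H lam) ∧
    (∀ lam : H →ₗ[k] k, IsPartialAction k H lam →
      (∀ g : G, lam (A.basis g) = 0 ∨ lam (A.basis g) = 1) ∧
      ∃ N : Subgroup G,
        (∀ g : G, g ∈ N ↔ lam (A.basis g) ≠ 0) ∧
        (∀ g : G, lam (A.basis g) = if g ∈ N then 1 else 0)) := by
  refine ⟨fun N lam hlam => ?_, fun lam hlam => ?_⟩
  · rw [A.isSymmPartialAction_iff, funext hlam]
    exact isGroupPartialAction_ite_mem N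
  · have hf := A.isPartialAction_iff.1 hlam
    refine ⟨hf.eq_zero_or_one, hf.subgroup, fun g => ?_, hf.eq_ite_mem_subgroup⟩
    rw [hf.eq_ite_mem_subgroup g]
    split_ifs with hg <;> simp [hg]
end

section
/- Let G be a group, k a field, N a finite subset of G, and z = Σ_{g∈N} α_g·g ∈ kG with α_g ≠ 0 for all g ∈ N. Then z is a partial coaction of kG on k (i.e. ε(z) = 1 and z⊗z = (z⊗1)Δ(z)) if and only if N is a subgroup of G, char k does not divide |N|, and α_g = 1/|N| for all g ∈ N. (Example 2.2.8) -/
/-!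
Write `c = A.basis.repr z` for the coefficients of `z`. Comparing coefficients at `a ⊗ b` in
`z ⊗ z = (z ⊗ 1) Δ(z)` gives `c b * c a = c b * c (a b⁻¹)`, i.e. `c` is invariant under right
translation by every element of its support `N`. Taking `a = b` shows that `c` is constant on `N`
with value `c 1 ≠ 0`, so `N` is closed under `(a, b) ↦ a b⁻¹` and is a subgroup. Finally
`ε(z) = |N| · c 1 = 1` forces `|N| ≠ 0` in `k` and `c 1 = |N|⁻¹`.
-/

open scoped TensorProduct
open scoped Classical

open Function Finset

theorem Module.Basis.repr_finset_sum_smul_self {ι R M : Type*} [Semiring R] [AddCommMonoid M]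
    [Module R M] (b : Module.Basis ι R M) (s : Finset ι) (c : ι → R) (i : ι) :
    b.repr (∑ j ∈ s, c j • b j) i = if i ∈ s then c i else 0 := by
  simp [map_sum, Finsupp.single_apply]

namespace GroupAlgebraData

variable {k G H : Type*} [Field k] [Group G] [Ring H] [HopfAlgebra k H]
  (A : GroupAlgebraData k G H)

theorem counit_finset_sum_smul_basis (N : Finset G) (α : G → k) :
    Coalgebra.counit (R := k) (∑ g ∈ N, α g • A.basis g) = ∑ g ∈ N, α g := by
  simp [map_sum, A.counit_basis]

theorem repr_mul_basis (z : H) (a b : G) :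
    A.basis.repr (z * A.basis b) a = A.basis.repr z (a * b⁻¹) := by
  have : (Finsupp.lapply a ∘ₗ A.basis.repr.toLinearMap ∘ₗ LinearMap.mulRight k (A.basis b))
      = Finsupp.lapply (a * b⁻¹) ∘ₗ A.basis.repr.toLinearMap := by
    refine A.basis.ext fun g => ?_
    simp [A.basis_mul, Finsupp.single_apply, eq_mul_inv_iff_mul_eq]
  exact LinearMap.congr_fun this z

theorem tensorProduct_repr_mul_comul (z w : H) (a b : G) :
    (A.basis.tensorProduct A.basis).repr ((z ⊗ₜ[k] 1) * Coalgebra.comul (R := k) w) (a, b)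
      = A.basis.repr w b * A.basis.repr z (a * b⁻¹) := by
  have : Finsupp.lapply (a, b) ∘ₗ (A.basis.tensorProduct A.basis).repr.toLinearMap ∘ₗ
        LinearMap.mulLeft k (z ⊗ₜ[k] (1 : H)) ∘ₗ Coalgebra.comul
      = A.basis.repr z (a * b⁻¹) • (Finsupp.lapply b ∘ₗ A.basis.repr.toLinearMap) := by
    refine A.basis.ext fun g => ?_
    simp +contextual [A.comul_basis, A.repr_mul_basis, Finsupp.single_apply]
  simpa [mul_comm] using LinearMap.congr_fun this w

theorem tmul_self_eq_mul_comul_iff (z : H) :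
    z ⊗ₜ[k] z = (z ⊗ₜ[k] 1) * Coalgebra.comul (R := k) z ↔
      ∀ a b, A.basis.repr z b * A.basis.repr z a
        = A.basis.repr z b * A.basis.repr z (a * b⁻¹) := by
  rw [← (A.basis.tensorProduct A.basis).repr.injective.eq_iff, Finsupp.ext_iff, Prod.forall]
  simp only [Module.Basis.tensorProduct_repr_tmul_apply, tensorProduct_repr_mul_comul,
    smul_eq_mul]

end GroupAlgebraData

section SupportInvariant

variable {G M₀ : Type*} [Group G]

theorem forall_mul_eq_mul_apply_mul_inv_iff [MonoidWithZero M₀] [IsLeftCancelMulZero M₀]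
    (f : G → M₀) :
    (∀ a b, f b * f a = f b * f (a * b⁻¹)) ↔ ∀ b ∈ support f, ∀ a, f (a * b⁻¹) = f a := by
  refine ⟨fun h b hb a => (mul_left_cancel₀ hb (h a b)).symm, fun h a b => ?_⟩
  by_cases hb : f b = 0
  · simp [hb]
  · rw [h b hb a]

theorem forall_support_apply_mul_inv_eq_iff [Zero M₀] {f : G → M₀} (hf : (support f).Nonempty) :
    (∀ b ∈ support f, ∀ a, f (a * b⁻¹) = f a) ↔
      ∃ K : Subgroup G, support f = K ∧ ∀ g ∈ K, f g = f 1 := by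
  constructor
  · intro h
    have hconst : ∀ g ∈ support f, f g = f 1 := fun g hg => by
      simpa using (h g hg g).symm
    refine ⟨Subgroup.ofDiv (support f) hf fun x hx y hy => ?_, rfl, hconst⟩
    rwa [mem_support, h y hy x]
  · rintro ⟨K, hK, hconst⟩ b hb a
    rw [hK] at hb
    by_cases ha : a ∈ K
    · rw [hconst a ha, hconst _ (K.mul_mem ha (K.inv_mem hb))]
    · have ha' : a * b⁻¹ ∉ K := fun h => ha (by simpa using K.mul_mem h hb)
      rw [← SetLike.mem_coe, ← hK, notMem_support] at ha ha'
      rw [ha, ha']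

theorem sum_eq_one_and_forall_support_apply_mul_inv_eq_iff {k : Type*} [Field k] {f : G → k}
    {N : Finset G} (hN : support f = N) :
    (∑ g ∈ N, f g = 1 ∧ ∀ b ∈ support f, ∀ a, f (a * b⁻¹) = f a) ↔
      (∃ K : Subgroup G, (N : Set G) = K) ∧ (#N : k) ≠ 0 ∧ ∀ g ∈ N, f g = (#N : k)⁻¹ := by
  constructor
  · rintro ⟨hsum, hinv⟩
    have hne : (support f).Nonempty := by
      rw [hN, coe_nonempty]
      exact nonempty_of_sum_ne_zero (hsum ▸ one_ne_zero)
    obtain ⟨K, hK, hconst⟩ := (forall_support_apply_mul_inv_eq_iff hne).1 hinv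
    have hconstN : ∀ g ∈ N, f g = f 1 := fun g hg =>
      hconst g (by rw [← SetLike.mem_coe, ← hK, hN]; exact hg)
    rw [sum_congr rfl hconstN, sum_const, nsmul_eq_mul] at hsum
    refine ⟨⟨K, hN ▸ hK⟩, left_ne_zero_of_mul_eq_one hsum, fun g hg => ?_⟩
    rw [hconstN g hg, eq_inv_of_mul_eq_one_right hsum]
  · rintro ⟨⟨K, hK⟩, hcard, hval⟩
    have hone : (1 : G) ∈ N := by rw [← mem_coe, hK]; exact K.one_mem
    have hne : (support f).Nonempty := ⟨1, by rw [hN]; exact hone⟩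
    refine ⟨?_, (forall_support_apply_mul_inv_eq_iff hne).2 ⟨K, hN.trans hK, fun g hg => ?_⟩⟩
    · rw [sum_congr rfl hval, sum_const, nsmul_eq_mul, mul_inv_cancel₀ hcard]
    · rw [hval g (by rw [← mem_coe, hK]; exact hg), hval 1 hone]

end SupportInvariant

/-- Example 2.2.8: let `G` be a group, `k` a field, `N` a finite subset of `G` and
`z = Σ_{g∈N} α_g·g ∈ kG` with all `α_g ≠ 0`.  Then `z` is a partial coaction of `kG` on `k`
(i.e. `ε(z) = 1` and `z⊗z = (z⊗1)Δ(z)`) if and only if `N` is a subgroup of `G`, `char k`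
does not divide `|N|`, and `α_g = 1/|N|` for all `g ∈ N`. -/
theorem example_2_2_8 {k G H : Type*} [Field k] [Group G] [Ring H] [HopfAlgebra k H]
    (A : GroupAlgebraData k G H) (N : Finset G) (α : G → k)
    (hα : ∀ g ∈ N, α g ≠ 0) :
    IsPartialCoaction k H (∑ g ∈ N, α g • A.basis g) ↔
      (∃ N' : Subgroup G, (N : Set G) = (N' : Set G)) ∧
      ¬ ((ringChar k : ℕ) ∣ N.card) ∧
      ∀ g ∈ N, α g = (N.card : k)⁻¹ := by
  set z := ∑ g ∈ N, α g • A.basis g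
  have hz : ∀ g, A.basis.repr z g = if g ∈ N then α g else 0 :=
    A.basis.repr_finset_sum_smul_self N α
  have hαz : ∀ g ∈ N, α g = A.basis.repr z g := fun g hg => by rw [hz, if_pos hg]
  have hsupp : support (A.basis.repr z) = N := by
    ext g
    by_cases hg : g ∈ N <;> simp [hz, hg, hα]
  rw [IsPartialCoaction, A.counit_finset_sum_smul_basis, A.tmul_self_eq_mul_comul_iff,
    forall_mul_eq_mul_apply_mul_inv_iff, ← ringChar.spec, sum_congr rfl hαz]
  exact (sum_eq_one_and_forall_support_apply_mul_inv_eq_iff hsupp).trans <|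
    and_congr_right' <| and_congr_right' <| forall₂_congr fun g hg => by rw [hαz g hg]
end
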